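/- arXiv:2006.13659 — 4 statements merged into one kernel-verified Lean document; each statement's English description precedes it below -/
import Mathlib

section
/- Theorem 1 (Truth sharing implies truth learning without self-awareness). Suppose the agents run the partial-information social learning algorithm without self-awareness with transmitted hypothesis θ_TX = θ₀. Under Assumptions 1, 2 and 3, for every agent k the belief on the transmitted hypothesis converges to one almost surely: μ_{k,i}(θ_TX) → 1 a.s. as i → ∞. -/
/-!
From time `1` on, every agent's belief is spread evenly over the hypotheses other than `θTX`, so
for a fixed `θ ≠ θTX` the log-ratios `Y_{k,i} = log (μ_{k,i+1}(θTX) / μ_{k,i+1}(θ))` obey the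
linear recursion `Y_{i+1} = (Y_i + x_i) A`, where `x_{ℓ,i}` is the log-likelihood ratio of `θTX`
against the fictitious hypothesis `θ̄TX` at agent `ℓ`'s signal `ξ_{ℓ,i+2}`. By the strong law the
Perron average `Y_i ⬝ v` grows like `i ∑_ℓ v_ℓ d_ℓ(θ̄TX)`, which is positive by Gibbs' inequality
and Assumption 3. Some power `Aⁿ` dominates `δ v 1ᵀ` entrywise, so over `n` steps the minimum of
`Y_i` over the agents is pulled towards the average and tends to `+∞` as well. Finally
`μ_{k,i+1}(θTX) = 1 / (1 + (H - 1) e^{-Y_{k,i}})`.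
-/

open MeasureTheory ProbabilityTheory Filter Topology

open Finset Real
open scoped Matrix

lemma tendsto_atTop_of_mul_add_le_succ {u t : ℕ → ℝ} {ρ : ℝ} (hρ₀ : 0 ≤ ρ) (hρ₁ : ρ < 1)
    (hu : ∀ q, ρ * u q + t q ≤ u (q + 1)) (ht : Tendsto t atTop atTop) :
    Tendsto u atTop atTop := by
  refine tendsto_atTop.2 fun C => ?_
  obtain ⟨Q, hQ⟩ := eventually_atTop.1 (ht.eventually_ge_atTop ((1 - ρ) * C + 1))
  -- past `Q`, the sequence climbs by at least `1` per step until it reaches `C`, and stays there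
  have climb : ∀ p : ℕ, min C (u Q + p) ≤ u (Q + p) := by
    intro p
    induction p with
    | zero => simp
    | succ p ih =>
      have hstep := hu (Q + p)
      have htQ := hQ (Q + p) (Nat.le_add_right Q p)
      rw [← add_assoc]
      push_cast
      rcases le_or_gt C (u (Q + p)) with hC | hC
      · exact min_le_of_left_le (by nlinarith)
      · have hclimb : u Q + p ≤ u (Q + p) := by
          rcases min_le_iff.1 ih with h | h
          · linarith
          · exact h
        exact min_le_of_right_le (by nlinarith)
  obtain ⟨p₀, hp₀⟩ := exists_nat_ge (C - u Q)
  filter_upwards [eventually_ge_atTop (Q + p₀)] with i hi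
  obtain ⟨p, rfl⟩ := Nat.exists_eq_add_of_le (le_trans (Nat.le_add_right Q p₀) hi)
  have hp : (p₀ : ℝ) ≤ p := by exact_mod_cast (Nat.add_le_add_iff_left).1 hi
  exact le_trans (le_min le_rfl (by linarith)) (climb p)

lemma tendsto_atTop_of_tendsto_comp_mul_add {β : Type*} [Preorder β] {u : ℕ → β} {n : ℕ}
    (hn : n ≠ 0) (h : ∀ r < n, Tendsto (fun q => u (q * n + r)) atTop atTop) :
    Tendsto u atTop atTop := by
  refine tendsto_atTop.2 fun C => ?_
  have hall : ∀ᶠ q in atTop, ∀ r ∈ range n, C ≤ u (q * n + r) :=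
    (eventually_all_finset _).2 fun r hr => (h r (mem_range.1 hr)).eventually_ge_atTop C
  filter_upwards [(Nat.tendsto_div_const_atTop hn).eventually hall] with i hi
  simpa [Nat.div_add_mod'] using
    hi (i % n) (mem_range.2 (Nat.mod_lt i (Nat.pos_of_ne_zero hn)))

lemma tendsto_atTop_of_mul_add_le {u t : ℕ → ℝ} {ρ : ℝ} {n : ℕ} (hn : n ≠ 0) (hρ₀ : 0 ≤ ρ)
    (hρ₁ : ρ < 1) (hu : ∀ i, ρ * u i + t i ≤ u (i + n)) (ht : Tendsto t atTop atTop) :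
    Tendsto u atTop atTop := by
  refine tendsto_atTop_of_tendsto_comp_mul_add hn fun r _ => ?_
  have hidx : Tendsto (fun q => q * n + r) atTop atTop := tendsto_atTop_mono
    (fun q => le_add_right (Nat.le_mul_of_pos_right q (Nat.pos_of_ne_zero hn))) tendsto_id
  exact tendsto_atTop_of_mul_add_le_succ hρ₀ hρ₁
    (fun q => by simpa [add_mul, add_right_comm] using hu (q * n + r)) (ht.comp hidx)

lemma Filter.Tendsto.comp_add_div_natCast {f : ℕ → ℝ} {β : ℝ}
    (h : Tendsto (fun q => f q / q) atTop (𝓝 β)) (j : ℕ) :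
    Tendsto (fun q => f (q + j) / q) atTop (𝓝 β) := by
  have hratio : Tendsto (fun q : ℕ => 1 + (j : ℝ) / q) atTop (𝓝 1) := by
    simpa using (tendsto_const_div_atTop_nhds_zero_nat (j : ℝ)).const_add 1
  have := (h.comp (tendsto_add_atTop_nat j)).mul hratio
  rw [mul_one] at this
  refine this.congr' ?_
  filter_upwards [eventually_ne_atTop 0] with q hq
  have : (q : ℝ) ≠ 0 := Nat.cast_ne_zero.2 hq
  simp only [Function.comp_apply, Nat.cast_add]
  field_simp

lemma tendsto_atTop_of_tendsto_div_natCast {f : ℕ → ℝ} {β : ℝ} (hβ : 0 < β)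
    (h : Tendsto (fun q => f q / q) atTop (𝓝 β)) : Tendsto f atTop atTop := by
  refine (h.pos_mul_atTop hβ tendsto_natCast_atTop_atTop).congr' ?_
  filter_upwards [eventually_ne_atTop 0] with q hq
  exact div_mul_cancel₀ _ (Nat.cast_ne_zero.2 hq)

lemma tendsto_comp_add_div_natCast_zero_of_sum_range {x : ℕ → ℝ} {β : ℝ}
    (h : Tendsto (fun q => (∑ j ∈ range q, x j) / q) atTop (𝓝 β)) (j : ℕ) :
    Tendsto (fun q => x (q + j) / q) atTop (𝓝 0) := by
  have := (h.comp_add_div_natCast (j + 1)).sub (h.comp_add_div_natCast j)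
  rw [sub_self] at this
  refine this.congr fun q => ?_
  rw [← add_assoc, sum_range_succ, ← sub_div, add_sub_cancel_left]

lemma tendsto_sum_abs_comp_add_div_natCast {ι : Type*} [Fintype ι] {x : ℕ → ι → ℝ}
    {α : ι → ℝ} (hx : ∀ ℓ, Tendsto (fun q => (∑ j ∈ range q, x j ℓ) / q) atTop (𝓝 (α ℓ)))
    (n : ℕ) : Tendsto (fun i => (∑ j ∈ range n, ∑ ℓ, |x (i + j) ℓ|) / i) atTop (𝓝 0) := by
  have h := tendsto_finsetSum (range n) fun j _ => tendsto_finsetSum univ fun ℓ _ =>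
    (tendsto_comp_add_div_natCast_zero_of_sum_range (hx ℓ) j).abs
  simp only [abs_zero, sum_const_zero] at h
  refine h.congr fun i => ?_
  simp only [sum_div, abs_div, Nat.abs_cast]

namespace Matrix

variable {ι : Type*} [Fintype ι] {A : Matrix ι ι ℝ}

lemma tendsto_dotProduct_div_of_vecMul_recursion {v : ι → ℝ} (hAv : A *ᵥ v = v)
    {Y x : ℕ → ι → ℝ} (hY : ∀ i, Y (i + 1) = (Y i + x i) ᵥ* A) {α : ι → ℝ}
    (hx : ∀ ℓ, Tendsto (fun q => (∑ j ∈ range q, x j ℓ) / q) atTop (𝓝 (α ℓ))) :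
    Tendsto (fun i => (Y i ⬝ᵥ v) / i) atTop (𝓝 (α ⬝ᵥ v)) := by
  have hstep : ∀ i, Y (i + 1) ⬝ᵥ v = Y i ⬝ᵥ v + x i ⬝ᵥ v := fun i => by
    rw [hY, ← dotProduct_mulVec, hAv, add_dotProduct]
  have hsum : ∀ i, Y i ⬝ᵥ v = Y 0 ⬝ᵥ v + ∑ ℓ, (∑ j ∈ range i, x j ℓ) * v ℓ := fun i => by
    induction i with
    | zero => simp
    | succ i ih =>
      rw [hstep, ih, add_assoc]
      simp only [dotProduct, sum_range_succ, add_mul, sum_add_distrib]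
  have hlim := (tendsto_const_div_atTop_nhds_zero_nat (Y 0 ⬝ᵥ v)).add
    (tendsto_finsetSum univ fun ℓ _ => (hx ℓ).mul_const (v ℓ))
  rw [zero_add] at hlim
  refine hlim.congr fun i => ?_
  rw [hsum i, add_div, sum_div]
  simp only [div_mul_eq_mul_div]

variable [DecidableEq ι]

lemma add_le_vecMul_of_mem_colStochastic (hA : A ∈ colStochastic ℝ ι) {u w : ι → ℝ} {c : ℝ}
    (h : ∀ ℓ, u ℓ + c ≤ w ℓ) (k : ι) : (u ᵥ* A) k + c ≤ (w ᵥ* A) k := by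
  calc (u ᵥ* A) k + c = ∑ ℓ, (u ℓ + c) * A ℓ k := by
        simp only [vecMul, dotProduct, add_mul, sum_add_distrib, ← mul_sum,
          sum_col_of_mem_colStochastic hA, mul_one]
    _ ≤ (w ᵥ* A) k := sum_le_sum fun ℓ _ => mul_le_mul_of_nonneg_right (h ℓ) (hA.1 ℓ k)

lemma mul_dotProduct_add_le_vecMul_of_mem_colStochastic (hA : A ∈ colStochastic ℝ ι)
    {v : ι → ℝ} (hv : ∑ ℓ, v ℓ = 1) {c b : ℝ} (hcv : ∀ ℓ k, c * v ℓ ≤ A ℓ k) {w : ι → ℝ}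
    (hw : ∀ ℓ, b ≤ w ℓ) (k : ι) : c * (w ⬝ᵥ v) + (1 - c) * b ≤ (w ᵥ* A) k := by
  have hcol : ∑ ℓ, (A ℓ k - c * v ℓ) = 1 - c := by
    rw [sum_sub_distrib, sum_col_of_mem_colStochastic hA, ← mul_sum, hv, mul_one]
  calc c * (w ⬝ᵥ v) + (1 - c) * b = c * (w ⬝ᵥ v) + ∑ ℓ, b * (A ℓ k - c * v ℓ) := by
        rw [← mul_sum, hcol, mul_comm b]
    _ ≤ c * (w ⬝ᵥ v) + ∑ ℓ, w ℓ * (A ℓ k - c * v ℓ) := by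
        gcongr with ℓ
        · linarith [hcv ℓ k]
        · exact hw ℓ
    _ = (w ᵥ* A) k := by
        simp only [vecMul, dotProduct, mul_sub, sum_sub_distrib, mul_sum]
        ring_nf

lemma pos_mul_of_mem_colStochastic (hA : A ∈ colStochastic ℝ ι) {B : Matrix ι ι ℝ}
    (hB : ∀ ℓ k, 0 < B ℓ k) (ℓ k : ι) : 0 < (B * A) ℓ k := by
  obtain ⟨m, -, hm⟩ := exists_ne_zero_of_sum_ne_zero
    ((sum_col_of_mem_colStochastic hA k).symm ▸ one_ne_zero : ∑ m, A m k ≠ 0)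
  exact sum_pos' (fun m _ => mul_nonneg (hB ℓ m).le (hA.1 m k))
    ⟨m, mem_univ m, mul_pos (hB ℓ m) (lt_of_le_of_ne (hA.1 m k) (Ne.symm hm))⟩

lemma exists_mul_le_pow_of_mem_colStochastic (hA : A ∈ colStochastic ℝ ι)
    (hprim : ∃ n, ∀ ℓ k, 0 < (A ^ n) ℓ k) {v : ι → ℝ} (hv₀ : ∀ ℓ, 0 ≤ v ℓ)
    (hv : ∑ ℓ, v ℓ = 1) [Nonempty ι] :
    ∃ n ≠ 0, ∃ δ, 0 < δ ∧ δ ≤ 1 ∧ ∀ ℓ k, δ * v ℓ ≤ (A ^ n) ℓ k := by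
  obtain ⟨n, hn⟩ := hprim
  have hpos : ∀ ℓ k, 0 < (A ^ (n + 1)) ℓ k := by
    rw [pow_succ]; exact pos_mul_of_mem_colStochastic hA hn
  let δ := univ.inf' univ_nonempty fun p : ι × ι => (A ^ (n + 1)) p.1 p.2
  have hδ : ∀ ℓ k, δ ≤ (A ^ (n + 1)) ℓ k := fun ℓ k => inf'_le _ (mem_univ (ℓ, k))
  have hv₁ : ∀ ℓ, v ℓ ≤ 1 := fun ℓ => hv ▸ single_le_sum (fun m _ => hv₀ m) (mem_univ ℓ)
  have hδ₀ : 0 < δ := (lt_inf'_iff _).2 fun p _ => hpos p.1 p.2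
  obtain ⟨k⟩ := ‹Nonempty ι›
  exact ⟨n + 1, n.succ_ne_zero, δ, hδ₀,
    (hδ k k).trans (le_one_of_mem_colStochastic (pow_mem hA _)),
    fun ℓ k => (mul_le_of_le_one_right hδ₀.le (hv₁ ℓ)).trans (hδ ℓ k)⟩

lemma vecMul_pow_sub_sum_le (hA : A ∈ colStochastic ℝ ι) {Y x : ℕ → ι → ℝ} {g : ℕ → ℝ}
    (hY : ∀ i, Y (i + 1) = (Y i + x i) ᵥ* A) (hg : ∀ i ℓ, -g i ≤ x i ℓ) (i p : ℕ) (k : ι) :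
    (Y i ᵥ* A ^ p) k - ∑ j ∈ range p, g (i + j) ≤ Y (i + p) k := by
  induction p generalizing k with
  | zero => simp
  | succ p ih =>
    have h := add_le_vecMul_of_mem_colStochastic hA
      (c := -(∑ j ∈ range p, g (i + j)) - g (i + p)) (u := Y i ᵥ* A ^ p)
      (w := Y (i + p) + x (i + p))
      (fun ℓ => by simp only [Pi.add_apply]; linarith [ih ℓ, hg (i + p) ℓ]) k
    rw [vecMul_vecMul, ← pow_succ, ← hY] at h
    rw [sum_range_succ, ← add_assoc]
    linarith

theorem tendsto_atTop_of_vecMul_recursion (hA : A ∈ colStochastic ℝ ι)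
    (hprim : ∃ n, ∀ ℓ k, 0 < (A ^ n) ℓ k) {v : ι → ℝ} (hv₀ : ∀ ℓ, 0 ≤ v ℓ)
    (hv : ∑ ℓ, v ℓ = 1) (hAv : A *ᵥ v = v) {Y x : ℕ → ι → ℝ}
    (hY : ∀ i, Y (i + 1) = (Y i + x i) ᵥ* A) {α : ι → ℝ}
    (hx : ∀ ℓ, Tendsto (fun q => (∑ j ∈ range q, x j ℓ) / q) atTop (𝓝 (α ℓ)))
    (hα : 0 < α ⬝ᵥ v) (k : ι) : Tendsto (fun i => Y i k) atTop atTop := by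
  have : Nonempty ι := ⟨k⟩
  obtain ⟨n, hn, δ, hδ₀, hδ₁, hδv⟩ := exists_mul_le_pow_of_mem_colStochastic hA hprim hv₀ hv
  let m i := univ.inf' univ_nonempty (Y i)
  have hm : ∀ i ℓ, m i ≤ Y i ℓ := fun i ℓ => inf'_le _ (mem_univ ℓ)
  let t i := δ * (Y i ⬝ᵥ v) - ∑ j ∈ range n, ∑ ℓ, |x (i + j) ℓ|
  -- mixing over `n` steps pulls the worst agent towards the network average
  have hrec : ∀ i, (1 - δ) * m i + t i ≤ m (i + n) := fun i => le_inf' _ _ fun k _ => by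
    have hmix :=
      mul_dotProduct_add_le_vecMul_of_mem_colStochastic (pow_mem hA n) hv hδv (hm i) k
    have hdrift := vecMul_pow_sub_sum_le hA hY (g := fun i => ∑ ℓ, |x i ℓ|)
      (fun i ℓ => (neg_abs_le _).trans' (neg_le_neg (single_le_sum (f := fun ℓ => |x i ℓ|)
        (fun _ _ => abs_nonneg _) (mem_univ ℓ)))) i n k
    linarith
  have ht : Tendsto t atTop atTop := by
    refine tendsto_atTop_of_tendsto_div_natCast (mul_pos hδ₀ hα) ?_
    have := ((tendsto_dotProduct_div_of_vecMul_recursion hAv hY hx).const_mul δ).sub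
      (tendsto_sum_abs_comp_add_div_natCast hx n)
    rw [sub_zero] at this
    exact this.congr fun i => by rw [sub_div, mul_div_assoc]
  exact tendsto_atTop_mono (fun i => hm i k)
    (tendsto_atTop_of_mul_add_le hn (by linarith) (by linarith) hrec ht)

end Matrix

lemma sub_le_mul_log_div {p q : ℝ} (hp : 0 < p) (hq : 0 < q) : p - q ≤ p * log (p / q) := by
  have h := mul_le_mul_of_nonneg_left (log_le_sub_one_of_pos (div_pos hq hp)) hp.le
  rw [log_div hq.ne' hp.ne', mul_sub_one, mul_div_cancel₀ _ hp.ne'] at h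
  rw [log_div hp.ne' hq.ne']
  linarith

lemma abs_log_div_le_sum {ι : Type*} {s : Finset ι} (hs : s.Nonempty) {p : ℝ} (hp : 0 < p)
    {q : ι → ℝ} (hq : ∀ τ ∈ s, 0 < q τ) :
    |log (p / ((∑ τ ∈ s, q τ) / s.card))| ≤ ∑ τ ∈ s, |log (p / q τ)| := by
  have hcard : (0 : ℝ) < s.card := Nat.cast_pos.2 hs.card_pos
  have hsum : ∑ _τ ∈ s, (∑ τ ∈ s, q τ) / s.card = ∑ τ ∈ s, q τ := by
    rw [sum_const, nsmul_eq_mul, mul_div_cancel₀ _ hcard.ne']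
  have hmean : 0 < (∑ τ ∈ s, q τ) / s.card := div_pos (sum_pos hq hs) hcard
  -- the mean lies between two of the averaged values
  obtain ⟨τ₁, hτ₁, hle⟩ := exists_le_of_sum_le hs hsum.le
  obtain ⟨τ₂, hτ₂, hge⟩ := exists_le_of_sum_le hs hsum.ge
  have hbound : ∀ τ ∈ s, |log (p / q τ)| ≤ ∑ τ ∈ s, |log (p / q τ)| := fun τ hτ =>
    single_le_sum (f := fun τ => |log (p / q τ)|) (fun _ _ => abs_nonneg _) hτ
  rw [abs_le]
  constructor
  · have : log (p / q τ₁) ≤ log (p / ((∑ τ ∈ s, q τ) / s.card)) :=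
      log_le_log (div_pos hp (hq τ₁ hτ₁)) (div_le_div_of_nonneg_left hp.le hmean hle)
    linarith [neg_abs_le (log (p / q τ₁)), hbound τ₁ hτ₁]
  · have : log (p / ((∑ τ ∈ s, q τ) / s.card)) ≤ log (p / q τ₂) :=
      log_le_log (div_pos hp hmean) (div_le_div_of_nonneg_left hp.le (hq τ₂ hτ₂) hge)
    linarith [le_abs_self (log (p / q τ₂)), hbound τ₂ hτ₂]

section Divergence

variable {X : Type*} [MeasurableSpace X] {ν : Measure X} {p q : X → ℝ}

lemma integrable_mul_abs_log_div (hp : ∀ x, 0 < p x) (hq : ∀ x, 0 < q x) (hpm : Measurable p)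
    (hqm : Measurable q) (hqi : Integrable q ν)
    (hKL : Integrable (fun x => p x * log (p x / q x)) ν) :
    Integrable (fun x => p x * |log (p x / q x)|) ν := by
  refine integrable_of_le_of_le (g₁ := 0) (g₂ := fun x => p x * log (p x / q x) + 2 * q x)
    (by fun_prop) (ae_of_all _ fun x => mul_nonneg (hp x).le (abs_nonneg _))
    (ae_of_all _ fun x => ?_) (integrable_zero _ _ _) (hKL.add (hqi.const_mul 2))
  have h := sub_le_mul_log_div (hp x) (hq x)
  dsimp only
  rcases le_total 0 (log (p x / q x)) with hlog | hlog
  · rw [abs_of_nonneg hlog]; linarith [hq x]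
  · rw [abs_of_nonpos hlog]; linarith [hp x]

lemma integral_mul_log_div_nonneg (hp : ∀ x, 0 < p x) (hq : ∀ x, 0 < q x)
    (hp₁ : ∫ x, p x ∂ν = 1) (hq₁ : ∫ x, q x ∂ν = 1)
    (hKL : Integrable (fun x => p x * log (p x / q x)) ν) :
    0 ≤ ∫ x, p x * log (p x / q x) ∂ν := by
  have hpi : Integrable p ν := .of_integral_ne_zero (by rw [hp₁]; exact one_ne_zero)
  have hqi : Integrable q ν := .of_integral_ne_zero (by rw [hq₁]; exact one_ne_zero)
  have h := integral_mono (f := fun x => p x - q x) (hpi.sub hqi) hKL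
    fun x => sub_le_mul_log_div (hp x) (hq x)
  rwa [integral_sub hpi hqi, hp₁, hq₁, sub_self] at h

end Divergence

section FictitiousLik

variable {H : ℕ}

/-- The paper's fictitious likelihood `L(ξ|θ̄)` of the complement of `θ`, evaluated at the
likelihood vector `l = (L(ξ|τ))_τ`. -/
noncomputable def fictitiousLik (l : Fin H → ℝ) (θ : Fin H) : ℝ :=
  (∑ τ ∈ univ.erase θ, l τ) / ((H : ℝ) - 1)

lemma Fin.cast_card_erase_univ (θ : Fin H) : ((univ.erase θ).card : ℝ) = H - 1 := by
  rw [card_erase_of_mem (mem_univ θ), card_univ, Fintype.card_fin, Nat.cast_sub θ.pos,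
    Nat.cast_one]

lemma Fin.exists_ne_of_two_le (hH : 2 ≤ H) (θ : Fin H) : ∃ τ, τ ≠ θ :=
  Fintype.exists_ne_of_one_lt_card (by rw [Fintype.card_fin]; omega) θ

lemma fictitiousLik_pos (hH : 2 ≤ H) {l : Fin H → ℝ} (hl : ∀ τ, 0 < l τ) (θ : Fin H) :
    0 < fictitiousLik l θ := by
  obtain ⟨τ, hτ⟩ := Fin.exists_ne_of_two_le hH θ
  have : (1 : ℝ) < H := by exact_mod_cast hH
  exact div_pos (sum_pos (fun τ _ => hl τ) ⟨τ, mem_erase.2 ⟨hτ, mem_univ τ⟩⟩) (by linarith)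

lemma abs_log_div_fictitiousLik_le (hH : 2 ≤ H) {l : Fin H → ℝ} (hl : ∀ τ, 0 < l τ)
    {p : ℝ} (hp : 0 < p) (θ : Fin H) :
    |log (p / fictitiousLik l θ)| ≤ ∑ τ ∈ univ.erase θ, |log (p / l τ)| := by
  obtain ⟨τ, hτ⟩ := Fin.exists_ne_of_two_le hH θ
  simpa only [fictitiousLik, Fin.cast_card_erase_univ] using
    abs_log_div_le_sum ⟨τ, mem_erase.2 ⟨hτ, mem_univ τ⟩⟩ hp fun τ _ => hl τ

variable {X : Type*} [MeasurableSpace X] {ν : Measure X} {L : Fin H → X → ℝ}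

/-- The log-likelihood ratio of `θ` against `θ̄`; its mean under `L θ` is the paper's `d(θ̄)`. -/
noncomputable def fictitiousLLR (L : Fin H → X → ℝ) (θ : Fin H) (x : X) : ℝ :=
  log (L θ x / fictitiousLik (L · x) θ)

lemma measurable_fictitiousLLR (hmeas : ∀ θ, Measurable (L θ)) (θ : Fin H) :
    Measurable (fictitiousLLR L θ) :=
  ((hmeas θ).div ((Finset.measurable_sum _ fun τ _ => hmeas τ).div_const _)).log

lemma integrable_mul_fictitiousLLR (hH : 2 ≤ H) (hpos : ∀ θ x, 0 < L θ x)
    (hmeas : ∀ θ, Measurable (L θ)) (hdens : ∀ θ, ∫ x, L θ x ∂ν = 1)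
    (hKL : ∀ θ θ', Integrable (fun x => L θ x * log (L θ x / L θ' x)) ν) (θ : Fin H) :
    Integrable (fun x => L θ x * fictitiousLLR L θ x) ν := by
  refine Integrable.mono' (integrable_finsetSum (univ.erase θ) fun τ _ =>
      integrable_mul_abs_log_div (hpos θ) (hpos τ) (hmeas θ) (hmeas τ)
        (.of_integral_ne_zero (by rw [hdens τ]; exact one_ne_zero)) (hKL θ τ))
    ((hmeas θ).mul (measurable_fictitiousLLR hmeas θ)).aestronglyMeasurable
    (ae_of_all _ fun x => ?_)
  rw [norm_mul, Real.norm_of_nonneg (hpos θ x).le, Real.norm_eq_abs, ← mul_sum]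
  exact mul_le_mul_of_nonneg_left
    (abs_log_div_fictitiousLik_le hH (fun τ => hpos τ x) (hpos θ x) θ) (hpos θ x).le

lemma integral_mul_fictitiousLLR_nonneg (hH : 2 ≤ H) (hpos : ∀ θ x, 0 < L θ x)
    (hmeas : ∀ θ, Measurable (L θ)) (hdens : ∀ θ, ∫ x, L θ x ∂ν = 1)
    (hKL : ∀ θ θ', Integrable (fun x => L θ x * log (L θ x / L θ' x)) ν) (θ : Fin H) :
    0 ≤ ∫ x, L θ x * fictitiousLLR L θ x ∂ν := by
  refine integral_mul_log_div_nonneg (hpos θ) (fun x => fictitiousLik_pos hH (hpos · x) θ)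
    (hdens θ) ?_ (integrable_mul_fictitiousLLR hH hpos hmeas hdens hKL θ)
  have hint : ∀ τ, Integrable (L τ) ν := fun τ =>
    .of_integral_ne_zero (by rw [hdens τ]; exact one_ne_zero)
  have hH₁ : (H : ℝ) - 1 ≠ 0 := by
    have : (2 : ℝ) ≤ H := by exact_mod_cast hH
    linarith
  simp only [fictitiousLik]
  rw [integral_div, integral_finsetSum _ fun τ _ => hint τ, sum_congr rfl fun τ _ => hdens τ,
    sum_const, nsmul_one, Fin.cast_card_erase_univ, div_self hH₁]

end FictitiousLik

lemma log_sub_log_partial_bayes {H : ℕ} (hH : 2 ≤ H) {μ l : Fin H → ℝ} {θTX θ : Fin H}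
    (hθ : θ ≠ θTX) (hμ : ∀ τ, 0 < μ τ) (hl : ∀ τ, 0 < l τ) (hsymm : ∀ τ ≠ θTX, μ τ = μ θ) :
    log (μ θTX * l θTX / ∑ τ, μ τ * l τ) -
        log ((1 - μ θTX * l θTX / ∑ τ, μ τ * l τ) / ((H : ℝ) - 1)) =
      log (μ θTX / μ θ) + log (l θTX / fictitiousLik l θTX) := by
  have hH₁ : (0 : ℝ) < H - 1 := by
    have : (2 : ℝ) ≤ H := by exact_mod_cast hH
    linarith
  rw [fictitiousLik]
  set S := ∑ τ ∈ univ.erase θTX, l τ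
  have hS : 0 < S := sum_pos (fun τ _ => hl τ) ⟨θ, mem_erase.2 ⟨hθ, mem_univ θ⟩⟩
  have hD : ∑ τ, μ τ * l τ = μ θTX * l θTX + μ θ * S := by
    rw [← add_sum_erase _ _ (mem_univ θTX), mul_sum]
    exact congrArg _ (sum_congr rfl fun τ hτ => by rw [hsymm τ (ne_of_mem_erase hτ)])
  have hTX := mul_pos (hμ θTX) (hl θTX)
  have hrest := mul_pos (hμ θ) hS
  have hcompl : 1 - μ θTX * l θTX / ∑ τ, μ τ * l τ = μ θ * S / ∑ τ, μ τ * l τ := by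
    rw [hD]; field_simp; ring
  have hD₀ : 0 < ∑ τ, μ τ * l τ := hD ▸ add_pos hTX hrest
  rw [hcompl, ← log_div (div_pos hTX hD₀).ne' (div_pos (div_pos hrest hD₀) hH₁).ne',
    ← log_mul (div_pos (hμ θTX) (hμ θ)).ne' (div_pos (hl θTX) (div_pos hS hH₁)).ne']
  congr 1
  field_simp

/-- The recursions of the algorithm without self-awareness along one sample path;
`l k i θ` stands for `L_k(ξ_{k,i}|θ)`. -/
structure IsPartialInfoRun {ι : Type*} [Fintype ι] {H : ℕ} (a : ι → ι → ℝ) (θTX : Fin H)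
    (l μ ψ ψh : ι → ℕ → Fin H → ℝ) : Prop where
  bayes : ∀ k i θ, ψ k (i + 1) θ = μ k i θ * l k (i + 1) θ / ∑ θ', μ k i θ' * l k (i + 1) θ'
  share_tx : ∀ k i, ψh k (i + 1) θTX = ψ k (i + 1) θTX
  share_ntx : ∀ k i θ, θ ≠ θTX → ψh k (i + 1) θ = (1 - ψ k (i + 1) θTX) / ((H : ℝ) - 1)
  combine : ∀ k i θ, μ k (i + 1) θ = exp (∑ ℓ, a ℓ k * log (ψh ℓ (i + 1) θ)) /
    ∑ θ', exp (∑ ℓ, a ℓ k * log (ψh ℓ (i + 1) θ'))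

namespace IsPartialInfoRun

variable {ι : Type*} [Fintype ι] {H : ℕ} {a : ι → ι → ℝ} {θTX : Fin H}
  {l μ ψ ψh : ι → ℕ → Fin H → ℝ}

lemma belief_succ_pos (run : IsPartialInfoRun a θTX l μ ψ ψh) (k : ι) (i : ℕ) (θ : Fin H) :
    0 < μ k (i + 1) θ := by
  rw [run.combine]
  exact div_pos (exp_pos _) (sum_pos (fun _ _ => exp_pos _) ⟨θ, mem_univ θ⟩)

lemma sum_belief_succ (run : IsPartialInfoRun a θTX l μ ψ ψh) (k : ι) (i : ℕ) :
    ∑ θ, μ k (i + 1) θ = 1 := by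
  have : Nonempty (Fin H) := ⟨θTX⟩
  simp only [run.combine, ← sum_div]
  exact div_self (sum_pos (fun _ _ => exp_pos _) univ_nonempty).ne'

lemma belief_succ_eq (run : IsPartialInfoRun a θTX l μ ψ ψh) (k : ι) (i : ℕ) {θ θ' : Fin H}
    (hθ : θ ≠ θTX) (hθ' : θ' ≠ θTX) : μ k (i + 1) θ = μ k (i + 1) θ' := by
  simp only [run.combine, run.share_ntx _ _ _ hθ, run.share_ntx _ _ _ hθ']

lemma log_belief_ratio_succ (run : IsPartialInfoRun a θTX l μ ψ ψh) (hH : 2 ≤ H)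
    (hl : ∀ k i θ, 0 < l k i θ) {θ : Fin H} (hθ : θ ≠ θTX) (i : ℕ) :
    (fun k => log (μ k (i + 1 + 1) θTX / μ k (i + 1 + 1) θ)) =
      ((fun k => log (μ k (i + 1) θTX / μ k (i + 1) θ)) +
        fun k => log (l k (i + 1 + 1) θTX / fictitiousLik (l k (i + 1 + 1)) θTX)) ᵥ*
        Matrix.of a := by
  funext k
  simp only [Matrix.vecMul, dotProduct, Matrix.of_apply, Pi.add_apply]
  have hZ := sum_pos (fun θ' (_ : θ' ∈ univ) =>
    exp_pos (∑ ℓ, a ℓ k * log (ψh ℓ (i + 1 + 1) θ'))) ⟨θ, mem_univ θ⟩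
  rw [run.combine, run.combine, div_div_div_cancel_right₀ hZ.ne', ← exp_sub, log_exp,
    ← sum_sub_distrib]
  refine sum_congr rfl fun ℓ _ => ?_
  rw [← mul_sub, run.share_tx, run.share_ntx _ _ _ hθ, run.bayes, mul_comm,
    log_sub_log_partial_bayes hH hθ (run.belief_succ_pos ℓ i) (hl ℓ (i + 1 + 1))
      fun τ hτ => run.belief_succ_eq ℓ i hτ hθ]

lemma tendsto_belief_of_log_ratio (run : IsPartialInfoRun a θTX l μ ψ ψh) {θ : Fin H}
    (hθ : θ ≠ θTX) (k : ι)
    (h : Tendsto (fun i => log (μ k (i + 1) θTX / μ k (i + 1) θ)) atTop atTop) :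
    Tendsto (fun i => μ k i θTX) atTop (𝓝 1) := by
  refine (tendsto_add_atTop_iff_nat 1).1 ?_
  have hlim : Tendsto (fun i => (1 + ((H : ℝ) - 1) *
      exp (-log (μ k (i + 1) θTX / μ k (i + 1) θ)))⁻¹) atTop (𝓝 1) := by
    simpa using (((tendsto_exp_atBot.comp (tendsto_neg_atTop_atBot.comp h)).const_mul
      ((H : ℝ) - 1)).const_add 1).inv₀ (by norm_num)
  refine hlim.congr fun i => ?_
  have hTX := run.belief_succ_pos k i θTX
  have hθpos := run.belief_succ_pos k i θ
  have hsum : μ k (i + 1) θTX + ((H : ℝ) - 1) * μ k (i + 1) θ = 1 := by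
    have h := run.sum_belief_succ k i
    rwa [← add_sum_erase _ _ (mem_univ θTX),
      sum_congr rfl fun τ hτ => run.belief_succ_eq k i (ne_of_mem_erase hτ) hθ, sum_const,
      nsmul_eq_mul, Fin.cast_card_erase_univ] at h
  have hinv : 1 + ((H : ℝ) - 1) * (μ k (i + 1) θ / μ k (i + 1) θTX) = (μ k (i + 1) θTX)⁻¹ := by
    field_simp
    linarith
  rw [exp_neg, exp_log (div_pos hTX hθpos), inv_div, hinv, inv_inv]

end IsPartialInfoRun

section StrongLaw

variable {Ω X : Type*} [MeasurableSpace Ω] [MeasurableSpace X] {P : Measure Ω} {ν : Measure X}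
  {p f : X → ℝ}

lemma integrable_comp_iff_of_map_eq_withDensity {ξ : Ω → X} (hξ : Measurable ξ)
    (hp : Measurable p) (hp₀ : ∀ x, 0 ≤ p x)
    (hlaw : P.map ξ = ν.withDensity fun x => ENNReal.ofReal (p x)) (hf : Measurable f) :
    Integrable (fun ω => f (ξ ω)) P ↔ Integrable (fun x => p x * f x) ν := by
  change Integrable (f ∘ ξ) P ↔ _
  rw [← integrable_map_measure hf.aestronglyMeasurable hξ.aemeasurable, hlaw]
  simp only [ENNReal.ofReal, integrable_withDensity_iff_integrable_smul hp.real_toNNReal,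
    NNReal.smul_def, Real.coe_toNNReal _ (hp₀ _), smul_eq_mul]

lemma integral_comp_of_map_eq_withDensity {ξ : Ω → X} (hξ : Measurable ξ)
    (hp : Measurable p) (hp₀ : ∀ x, 0 ≤ p x)
    (hlaw : P.map ξ = ν.withDensity fun x => ENNReal.ofReal (p x)) (hf : Measurable f) :
    ∫ ω, f (ξ ω) ∂P = ∫ x, p x * f x ∂ν := by
  rw [← integral_map hξ.aemeasurable hf.aestronglyMeasurable, hlaw]
  simp only [ENNReal.ofReal, integral_withDensity_eq_integral_smul hp.real_toNNReal,
    NNReal.smul_def, Real.coe_toNNReal _ (hp₀ _), smul_eq_mul]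

lemma ae_tendsto_sum_comp_div_of_map_eq_withDensity {ξ : ℕ → Ω → X}
    (hξ : ∀ i, Measurable (ξ i)) (hindep : Pairwise fun i j => IndepFun (ξ i) (ξ j) P)
    (hp : Measurable p) (hp₀ : ∀ x, 0 ≤ p x)
    (hlaw : ∀ i, P.map (ξ i) = ν.withDensity fun x => ENNReal.ofReal (p x)) (hf : Measurable f)
    (hint : Integrable (fun x => p x * f x) ν) :
    ∀ᵐ ω ∂P, Tendsto (fun q => (∑ j ∈ range q, f (ξ j ω)) / q) atTop
      (𝓝 (∫ x, p x * f x ∂ν)) := by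
  have hident : ∀ i, IdentDistrib (fun ω => f (ξ i ω)) (fun ω => f (ξ 0 ω)) P P := fun i =>
    IdentDistrib.comp ⟨(hξ i).aemeasurable, (hξ 0).aemeasurable, by rw [hlaw, hlaw]⟩ hf
  have h := strong_law_ae (fun i ω => f (ξ i ω))
    ((integrable_comp_iff_of_map_eq_withDensity (hξ 0) hp hp₀ (hlaw 0) hf).2 hint)
    (fun i j hij => (hindep hij).comp hf hf) hident
  rw [integral_comp_of_map_eq_withDensity (hξ 0) hp hp₀ (hlaw 0) hf] at h
  filter_upwards [h] with ω hω
  exact hω.congr fun q => by rw [smul_eq_mul, inv_mul_eq_div]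

end StrongLaw

theorem truth_sharing_implies_truth_learning_without_self_awareness_general
    {Ω : Type} [mΩ : MeasurableSpace Ω] (P : Measure Ω)
    (K H : ℕ) (hH : 2 ≤ H)
    (X : Fin K → Type) [∀ k, MeasurableSpace (X k)]
    (ν : ∀ k, Measure (X k))
    (L : ∀ k : Fin K, Fin H → X k → ℝ)
    (θ0 : Fin H)
    (hLpos : ∀ k θ x, 0 < L k θ x)
    (hLmeas : ∀ k θ, Measurable (L k θ))
    (hLdens : ∀ k θ, ∫ x, L k θ x ∂(ν k) = 1)
    (ξ : ∀ k : Fin K, ℕ → Ω → X k)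
    (hξmeas : ∀ k i, Measurable (ξ k i))
    (hξdist : ∀ k (i : ℕ), 1 ≤ i →
      Measure.map (ξ k i) P = (ν k).withDensity (fun x => ENNReal.ofReal (L k θ0 x)))
    (hξindep : iIndepFun
      (fun (i : ℕ) (ω : Ω) (k : Fin K) => ξ k (i + 1) ω) P)
    (hKL : ∀ k θ θ',
      Integrable (fun x => L k θ x * Real.log (L k θ x / L k θ' x)) (ν k))
    (a : Fin K → Fin K → ℝ)
    (ha_nonneg : ∀ ℓ k, 0 ≤ a ℓ k)
    (ha_stoch : ∀ k, ∑ ℓ, a ℓ k = 1)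
    (ha_prim : ∃ n : ℕ, ∀ ℓ k, 0 < ((Matrix.of a) ^ n) ℓ k)
    (v : Fin K → ℝ)
    (hv_pos : ∀ ℓ, 0 < v ℓ)
    (hv_sum : ∑ ℓ, v ℓ = 1)
    (hv_eig : ∀ ℓ, ∑ k, a ℓ k * v k = v ℓ)
    (θTX : Fin H)
    (hθTX : θTX = θ0)
    (μb ψ ψh : Fin K → ℕ → Fin H → Ω → ℝ)
    (hψ : ∀ k (i : ℕ) θ ω, ψ k (i + 1) θ ω =
      μb k i θ ω * L k θ (ξ k (i + 1) ω) /
        ∑ θ', μb k i θ' ω * L k θ' (ξ k (i + 1) ω))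
    (hψh_tx : ∀ k (i : ℕ) ω, ψh k (i + 1) θTX ω = ψ k (i + 1) θTX ω)
    (hψh_ntx : ∀ k (i : ℕ) θ ω, θ ≠ θTX →
      ψh k (i + 1) θ ω = (1 - ψ k (i + 1) θTX ω) / ((H : ℝ) - 1))
    (hcomb : ∀ k (i : ℕ) θ ω, μb k (i + 1) θ ω =
      Real.exp (∑ ℓ, a ℓ k * Real.log (ψh ℓ (i + 1) θ ω)) /
        ∑ θ', Real.exp (∑ ℓ, a ℓ k * Real.log (ψh ℓ (i + 1) θ' ω)))
    (hclear : ∃ kstar : Fin K,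
      (∃ θ : Fin H, 0 < (∫ ω, Real.log (L kstar θ0 (ξ kstar 1 ω) / L kstar θ (ξ kstar 1 ω)) ∂P)) ∧
      0 < (∫ ω, Real.log (L kstar θ0 (ξ kstar 1 ω) / ((∑ τ ∈ Finset.univ.erase θ0, L kstar τ (ξ kstar 1 ω)) / ((H : ℝ) - 1))) ∂P)) :
    ∀ k : Fin K, ∀ᵐ ω ∂P,
      Tendsto (fun (i : ℕ) => μb k i θTX ω) atTop (𝓝 1) := by
  subst hθTX
  intro k
  obtain ⟨θ, hθ⟩ := Fin.exists_ne_of_two_le hH θTX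
  have run : ∀ ω, IsPartialInfoRun a θTX (fun k i θ => L k θ (ξ k i ω))
      (fun k i θ => μb k i θ ω) (fun k i θ => ψ k i θ ω) (fun k i θ => ψh k i θ ω) := fun ω =>
    ⟨fun k i θ => hψ k i θ ω, fun k i => hψh_tx k i ω, fun k i θ hθ => hψh_ntx k i θ ω hθ,
      fun k i θ => hcomb k i θ ω⟩
  have hslln : ∀ ℓ, ∀ᵐ ω ∂P, Tendsto
      (fun q => (∑ j ∈ range q, fictitiousLLR (L ℓ) θTX (ξ ℓ (j + 1 + 1) ω)) / q) atTop
      (𝓝 (∫ x, L ℓ θTX x * fictitiousLLR (L ℓ) θTX x ∂ν ℓ)) := fun ℓ =>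
    ae_tendsto_sum_comp_div_of_map_eq_withDensity (fun j => hξmeas ℓ _)
      (fun i j hij => (hξindep.indepFun (by simpa using hij)).comp (measurable_pi_apply ℓ)
        (measurable_pi_apply ℓ)) (hLmeas ℓ θTX) (fun x => (hLpos ℓ θTX x).le)
      (fun j => hξdist ℓ _ (by omega)) (measurable_fictitiousLLR (hLmeas ℓ) θTX)
      (integrable_mul_fictitiousLLR hH (hLpos ℓ) (hLmeas ℓ) (hLdens ℓ) (hKL ℓ) θTX)
  have hdrift : 0 < (fun ℓ => ∫ x, L ℓ θTX x * fictitiousLLR (L ℓ) θTX x ∂ν ℓ) ⬝ᵥ v := by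
    obtain ⟨kstar, -, hkstar⟩ := hclear
    change 0 < ∫ ω, fictitiousLLR (L kstar) θTX (ξ kstar 1 ω) ∂P at hkstar
    rw [integral_comp_of_map_eq_withDensity (hξmeas kstar 1) (hLmeas kstar θTX)
      (fun x => (hLpos kstar θTX x).le) (hξdist kstar 1 le_rfl)
      (measurable_fictitiousLLR (hLmeas kstar) θTX)] at hkstar
    exact sum_pos' (fun ℓ _ => mul_nonneg (integral_mul_fictitiousLLR_nonneg hH
      (hLpos ℓ) (hLmeas ℓ) (hLdens ℓ) (hKL ℓ) θTX) (hv_pos ℓ).le)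
      ⟨kstar, mem_univ _, mul_pos hkstar (hv_pos kstar)⟩
  filter_upwards [ae_all_iff.2 hslln] with ω hω
  exact (run ω).tendsto_belief_of_log_ratio hθ k <| Matrix.tendsto_atTop_of_vecMul_recursion
    (Y := fun i k => log (μb k (i + 1) θTX ω / μb k (i + 1) θ ω))
    (Matrix.mem_colStochastic_iff_sum.2 ⟨ha_nonneg, ha_stoch⟩) ha_prim
    (fun ℓ => (hv_pos ℓ).le) hv_sum (funext hv_eig)
    ((run ω).log_belief_ratio_succ hH (fun k i θ => hLpos k θ _) hθ) hω hdrift k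

theorem truth_sharing_implies_truth_learning_without_self_awareness
    {Ω : Type} [mΩ : MeasurableSpace Ω] (P : Measure Ω) [IsProbabilityMeasure P]
    (K H : ℕ) (hK : 0 < K) (hH : 2 ≤ H)
    (X : Fin K → Type) [∀ k, MeasurableSpace (X k)]
    (ν : ∀ k, Measure (X k))
    (L : ∀ k : Fin K, Fin H → X k → ℝ)
    (θ0 : Fin H)
    (hLpos : ∀ k θ x, 0 < L k θ x)
    (hLmeas : ∀ k θ, Measurable (L k θ))
    (hLdens : ∀ k θ, ∫ x, L k θ x ∂(ν k) = 1)
    (ξ : ∀ k : Fin K, ℕ → Ω → X k)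
    (hξmeas : ∀ k i, Measurable (ξ k i))
    (hξdist : ∀ k (i : ℕ), 1 ≤ i →
      Measure.map (ξ k i) P = (ν k).withDensity (fun x => ENNReal.ofReal (L k θ0 x)))
    (hξindep : iIndepFun
      (fun (i : ℕ) (ω : Ω) (k : Fin K) => ξ k (i + 1) ω) P)
    (hKL : ∀ k θ θ',
      Integrable (fun x => L k θ x * Real.log (L k θ x / L k θ' x)) (ν k))
    (a : Fin K → Fin K → ℝ)
    (ha_nonneg : ∀ ℓ k, 0 ≤ a ℓ k)
    (ha_stoch : ∀ k, ∑ ℓ, a ℓ k = 1)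
    (ha_prim : ∃ n : ℕ, ∀ ℓ k, 0 < ((Matrix.of a) ^ n) ℓ k)
    (v : Fin K → ℝ)
    (hv_pos : ∀ ℓ, 0 < v ℓ)
    (hv_sum : ∑ ℓ, v ℓ = 1)
    (hv_eig : ∀ ℓ, ∑ k, a ℓ k * v k = v ℓ)
    (θTX : Fin H)
    (hθTX : θTX = θ0)
    (μb ψ ψh : Fin K → ℕ → Fin H → Ω → ℝ)
    (μinit : Fin K → Fin H → ℝ)
    (hμinit_pos : ∀ k θ, 0 < μinit k θ)
    (hμinit_sum : ∀ k, ∑ θ, μinit k θ = 1)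
    (hμb0 : ∀ k θ ω, μb k 0 θ ω = μinit k θ)
    (hψ : ∀ k (i : ℕ) θ ω, ψ k (i + 1) θ ω =
      μb k i θ ω * L k θ (ξ k (i + 1) ω) /
        ∑ θ', μb k i θ' ω * L k θ' (ξ k (i + 1) ω))
    (hψh_tx : ∀ k (i : ℕ) ω, ψh k (i + 1) θTX ω = ψ k (i + 1) θTX ω)
    (hψh_ntx : ∀ k (i : ℕ) θ ω, θ ≠ θTX →
      ψh k (i + 1) θ ω = (1 - ψ k (i + 1) θTX ω) / ((H : ℝ) - 1))
    (hcomb : ∀ k (i : ℕ) θ ω, μb k (i + 1) θ ω =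
      Real.exp (∑ ℓ, a ℓ k * Real.log (ψh ℓ (i + 1) θ ω)) /
        ∑ θ', Real.exp (∑ ℓ, a ℓ k * Real.log (ψh ℓ (i + 1) θ' ω)))
    (hclear : ∃ kstar : Fin K,
      (∃ θ : Fin H, 0 < (∫ ω, Real.log (L kstar θ0 (ξ kstar 1 ω) / L kstar θ (ξ kstar 1 ω)) ∂P)) ∧
      0 < (∫ ω, Real.log (L kstar θ0 (ξ kstar 1 ω) / ((∑ τ ∈ Finset.univ.erase θ0, L kstar τ (ξ kstar 1 ω)) / ((H : ℝ) - 1))) ∂P)) :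
    ∀ k : Fin K, ∀ᵐ ω ∂P,
      Tendsto (fun (i : ℕ) => μb k i θTX ω) atTop (𝓝 1) :=
  truth_sharing_implies_truth_learning_without_self_awareness_general (mΩ := mΩ) P K H hH X ν L θ0
    hLpos hLmeas hLdens ξ hξmeas hξdist hξindep hKL a ha_nonneg ha_stoch ha_prim v hv_pos hv_sum
    hv_eig θTX hθTX μb ψ ψh hψ hψh_tx hψh_ntx hcomb hclear
end

section
/- Theorem 3, part 1 (Truth learning without self-awareness when the transmitted hypothesis is sufficiently distinguishable). Suppose the agents run the partial-information algorithm without self-awareness with transmitted hypothesis θ_TX, and assume Assumptions 1 and 2. If d_ave(θ_TX) > d_ave(θ̄_TX), then for every agent k, μ_{k,i}(θ_TX) → 0 almost surely, and consequently μ_{k,i}(θ) → 1/(H−1) almost surely for every θ ≠ θ_TX. -/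
/-!
From time 1 on, geometric pooling gives every hypothesis other than `θTX` the same belief, so
the state of agent `k` is the log-odds `y_k(i) = log μ_{k,i}(θTX) - log μ_{k,i}(θ)`, `θ ≠ θTX`.
Bayes' rule followed by pooling turns it into the linear recursion `y(i+1) = Aᵀ (y(i) + x(i))`,
where `x_ℓ(i) = log L_ℓ(ξ|θTX) - log L_ℓ(ξ|θ̄TX)` are i.i.d. with mean
`d_ℓ(θ̄TX) - d_ℓ(θTX)`. By the strong law the Perron average `vᵀ y(i)` decreases linearly, and
the minorization `Aⁿ ≥ ε v 1ᵀ` gives `max_k y_k(i+n) ≤ (1-ε) max_k y_k(i) + ε vᵀ y(i) + o(i)`,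
which drives every `y_k` to `-∞`. So `μ_{k,i}(θTX) → 0` and the rest of the mass splits evenly.
-/

open MeasureTheory ProbabilityTheory Filter Topology

open Finset Matrix Real

theorem exists_eventually_le_linear_of_contraction {u : ℕ → ℝ} {ε β : ℝ} {n : ℕ}
    (hε : 0 < ε) (hε₁ : ε ≤ 1)
    (hu : ∀ᶠ i in atTop, u (i + n) ≤ (1 - ε) * u i + ε * β * i) :
    ∃ γ, ∀ᶠ i in atTop, u i ≤ β * i + γ := by
  obtain ⟨i₀, hi₀⟩ := eventually_atTop.1 hu
  rcases n.eq_zero_or_pos with rfl | hn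
  · refine ⟨0, eventually_atTop.2 ⟨i₀, fun i hi => ?_⟩⟩
    have := hi₀ i hi
    simp only [add_zero] at this
    nlinarith
  -- `γ` covers the first `n` indices from `i₀`, and `εγ ≥ -βn` makes the bound survive a step.
  obtain ⟨γ₀, hγ₀⟩ := ((range (i₀ + n)).image fun i => u i - β * i).exists_le
  refine ⟨max γ₀ (-β * n / ε), eventually_atTop.2 ⟨i₀, fun i => ?_⟩⟩
  induction i using Nat.strong_induction_on with
  | _ i ih =>
    intro hi
    set γ := max γ₀ (-β * n / ε)
    by_cases hlt : i < i₀ + n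
    · linarith [hγ₀ _ (mem_image_of_mem _ (mem_range.2 hlt)), le_max_left γ₀ (-β * n / ε)]
    obtain ⟨j, rfl⟩ : ∃ j, i = j + n := ⟨i - n, by omega⟩
    have hj : u j ≤ β * j + γ := ih j (by omega) (by omega)
    have hεγ : -β * n ≤ ε * γ := by
      rw [← div_le_iff₀' hε]; exact le_max_right _ _
    calc u (j + n) ≤ (1 - ε) * u j + ε * β * j := hi₀ j (by omega)
      _ ≤ (1 - ε) * (β * j + γ) + ε * β * j := by gcongr
      _ ≤ β * ↑(j + n) + γ := by push_cast; linarith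

theorem eventually_le_mul_of_tendsto_inv_mul {f : ℕ → ℝ} {l r : ℝ}
    (h : Tendsto (fun i : ℕ => (i : ℝ)⁻¹ * f i) atTop (𝓝 l)) (hlr : l < r) :
    ∀ᶠ i : ℕ in atTop, f i ≤ r * i := by
  filter_upwards [h.eventually_le_const hlr, eventually_gt_atTop 0] with i hi hi₀
  have : (0 : ℝ) < i := by exact_mod_cast hi₀
  rwa [inv_mul_le_iff₀ this, mul_comm] at hi

section Cesaro

variable {E : Type*} [AddCommGroup E] [Module ℝ E] [TopologicalSpace E] [ContinuousSMul ℝ E]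

theorem tendsto_inv_smul_comp_add {f : ℕ → E} {e : E}
    (hf : Tendsto (fun i : ℕ => (i : ℝ)⁻¹ • f i) atTop (𝓝 e)) (p : ℕ) :
    Tendsto (fun i : ℕ => (i : ℝ)⁻¹ • f (i + p)) atTop (𝓝 e) := by
  have hratio : Tendsto (fun i : ℕ => ((i : ℝ) / (i + p))⁻¹) atTop (𝓝 1) := by
    simpa using (tendsto_natCast_div_add_atTop (p : ℝ)).inv₀ one_ne_zero
  have := hratio.smul ((hf.comp (tendsto_add_atTop_nat p)))
  rw [one_smul] at this
  refine this.congr' (eventually_gt_atTop 0 |>.mono fun i hi => ?_)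
  have : (i : ℝ) ≠ 0 := by positivity
  simp only [Function.comp_apply, smul_smul, Nat.cast_add]
  congr 1
  field_simp

theorem tendsto_inv_smul_add_of_tendsto_cesaro [IsTopologicalAddGroup E] {x : ℕ → E} {e : E}
    (hx : Tendsto (fun i : ℕ => (i : ℝ)⁻¹ • ∑ j ∈ range i, x j) atTop (𝓝 e)) (m : ℕ) :
    Tendsto (fun i : ℕ => (i : ℝ)⁻¹ • x (i + m)) atTop (𝓝 0) := by
  have := (tendsto_inv_smul_comp_add hx (m + 1)).sub (tendsto_inv_smul_comp_add hx m)
  rw [sub_self] at this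
  refine this.congr fun i => ?_
  rw [← smul_sub, ← add_assoc, sum_range_succ, add_sub_cancel_left]

theorem tendsto_inv_smul_of_tendsto_cesaro_increments [IsTopologicalAddGroup E] {w : ℕ → E} {c : E}
    (hw : Tendsto (fun i : ℕ => (i : ℝ)⁻¹ • ∑ j ∈ range i, (w (j + 1) - w j)) atTop (𝓝 c)) :
    Tendsto (fun i : ℕ => (i : ℝ)⁻¹ • w i) atTop (𝓝 c) := by
  have h₀ : Tendsto (fun i : ℕ => (i : ℝ)⁻¹ • w 0) atTop (𝓝 0) := by
    simpa using (tendsto_inv_atTop_nhds_zero_nat (𝕜 := ℝ)).smul_const (w 0)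
  refine (add_zero c ▸ hw.add h₀).congr fun i => ?_
  rw [sum_range_sub, ← smul_add, sub_add_cancel]

end Cesaro

section Network

variable {ι : Type*} [Fintype ι]

theorem sum_apply_pow_eq_one [DecidableEq ι] {A : Matrix ι ι ℝ} (hA : ∀ k, ∑ ℓ, A ℓ k = 1)
    (m : ℕ) (k : ι) : ∑ ℓ, (A ^ m) ℓ k = 1 := by
  induction m generalizing k with
  | zero => simp [one_apply]
  | succ m ih =>
    simp only [pow_succ, mul_apply]
    rw [sum_comm]
    simp only [← sum_mul, ih, one_mul, hA]

theorem exists_minorization [Nonempty ι] {S : Matrix ι ι ℝ} (hS : ∀ ℓ k, 0 < S ℓ k)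
    {v : ι → ℝ} (hv₀ : ∀ ℓ, 0 ≤ v ℓ) (hv : ∑ ℓ, v ℓ = 1) :
    ∃ ε > 0, ∀ ℓ k, ε * v ℓ ≤ S ℓ k := by
  obtain ⟨p, hp⟩ := Finite.exists_min fun p : ι × ι => S p.1 p.2
  refine ⟨S p.1 p.2, hS _ _, fun ℓ k => ?_⟩
  have hv₁ : v ℓ ≤ 1 := hv ▸ single_le_sum (fun m _ => hv₀ m) (mem_univ ℓ)
  nlinarith [hp (ℓ, k), hS p.1 p.2]

theorem vecMul_apply_le_of_minorization {S : Matrix ι ι ℝ} {v : ι → ℝ} {ε : ℝ}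
    (hS : ∀ k, ∑ ℓ, S ℓ k = 1) (hv : ∑ ℓ, v ℓ = 1) (hmin : ∀ ℓ k, ε * v ℓ ≤ S ℓ k)
    {x : ι → ℝ} {m : ℝ} (hx : ∀ ℓ, x ℓ ≤ m) (k : ι) :
    (x ᵥ* S) k ≤ (1 - ε) * m + ε * (v ⬝ᵥ x) := by
  calc (x ᵥ* S) k = ∑ ℓ, (S ℓ k - ε * v ℓ) * x ℓ + ε * (v ⬝ᵥ x) := by
        simp only [vecMul, dotProduct, mul_sum, ← sum_add_distrib]
        exact sum_congr rfl fun ℓ _ => by ring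
    _ ≤ ∑ ℓ, (S ℓ k - ε * v ℓ) * m + ε * (v ⬝ᵥ x) := by
        gcongr with ℓ
        · exact sub_nonneg.2 (hmin ℓ k)
        · exact hx ℓ
    _ = (1 - ε) * m + ε * (v ⬝ᵥ x) := by
        rw [← sum_mul, sum_sub_distrib, hS, ← mul_sum, hv, mul_one]

theorem tendsto_inv_smul_sub_vecMul_pow [DecidableEq ι] {A : Matrix ι ι ℝ} {y X : ℕ → ι → ℝ}
    (hy : ∀ i, y (i + 1) = (y i + X i) ᵥ* A)
    (hX : ∀ m, Tendsto (fun i : ℕ => (i : ℝ)⁻¹ • X (i + m)) atTop (𝓝 0)) (m : ℕ) :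
    Tendsto (fun i : ℕ => (i : ℝ)⁻¹ • (y (i + m) - y i ᵥ* A ^ m)) atTop (𝓝 0) := by
  induction m with
  | zero => simp
  | succ m ih =>
    have hcont := (continuous_id.matrix_vecMul (continuous_const (y := A))).tendsto'
      (0 : ι → ℝ) 0 (zero_vecMul A)
    refine (hcont.comp ((add_zero (0 : ι → ℝ)) ▸ ih.add (hX m))).congr fun i => ?_
    simp only [Function.comp_apply, id, ← smul_add, smul_vecMul, ← add_assoc, hy, pow_succ,
      ← vecMul_vecMul, sub_add_eq_add_sub, sub_vecMul]

theorem tendsto_atBot_of_diffusion_recursion [DecidableEq ι] {A : Matrix ι ι ℝ}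
    (hA : ∀ k, ∑ ℓ, A ℓ k = 1) {n : ℕ} (hprim : ∀ ℓ k, 0 < (A ^ n) ℓ k) {v : ι → ℝ}
    (hv₀ : ∀ ℓ, 0 ≤ v ℓ) (hv : ∑ ℓ, v ℓ = 1) (hAv : A *ᵥ v = v) {y X : ℕ → ι → ℝ}
    (hy : ∀ i, y (i + 1) = (y i + X i) ᵥ* A) {e : ι → ℝ}
    (hX : Tendsto (fun i : ℕ => (i : ℝ)⁻¹ • ∑ j ∈ range i, X j) atTop (𝓝 e))
    (he : v ⬝ᵥ e < 0) (k : ι) :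
    Tendsto (fun i => y i k) atTop atBot := by
  have : Nonempty ι := ⟨k⟩
  obtain ⟨ε, hε, hmin⟩ := exists_minorization hprim hv₀ hv
  have hε₁ : ε ≤ 1 := by
    have := sum_le_sum (s := univ) fun ℓ _ => hmin ℓ k
    rwa [← mul_sum, hv, mul_one, sum_apply_pow_eq_one hA] at this
  set c := v ⬝ᵥ e
  have hw : Tendsto (fun i : ℕ => (i : ℝ)⁻¹ * (v ⬝ᵥ y i)) atTop (𝓝 c) := by
    refine tendsto_inv_smul_of_tendsto_cesaro_increments ?_
    have hinc : ∀ j, v ⬝ᵥ y (j + 1) - v ⬝ᵥ y j = v ⬝ᵥ X j := by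
      intro j
      rw [hy, dotProduct_comm, ← dotProduct_mulVec, hAv, dotProduct_comm, dotProduct_add]
      ring
    simp only [hinc, ← dotProduct_sum, ← dotProduct_smul]
    exact (continuous_const.dotProduct continuous_id).tendsto e |>.comp hX
  have hE := fun k' => tendsto_pi_nhds.1
    (tendsto_inv_smul_sub_vecMul_pow hy (tendsto_inv_smul_add_of_tendsto_cesaro hX) n) k'
  set M : ℕ → ℝ := fun i => univ.sup' univ_nonempty (y i)
  -- the slack between `c` and `c / 2` is shared by the average (`3c/4`) and the error (`-εc/4`)
  have hM : ∀ᶠ i in atTop, M (i + n) ≤ (1 - ε) * M i + ε * (c / 2) * i := by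
    have hE' := eventually_all.2 fun k' =>
      eventually_le_mul_of_tendsto_inv_mul (hE k') (show (0 : ℝ) < -(ε * c) / 4 by nlinarith)
    filter_upwards [eventually_le_mul_of_tendsto_inv_mul hw (show c < 3 * c / 4 by linarith),
      hE'] with i hwi hEi
    refine sup'_le _ _ fun k' _ => ?_
    have hEi := hEi k'
    simp only [Pi.sub_apply] at hEi
    have hi : (0 : ℝ) ≤ i := i.cast_nonneg
    calc y (i + n) k' = (y i ᵥ* A ^ n) k' + (y (i + n) k' - (y i ᵥ* A ^ n) k') := by ring
      _ ≤ (1 - ε) * M i + ε * (v ⬝ᵥ y i) + -(ε * c) / 4 * i :=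
        add_le_add (vecMul_apply_le_of_minorization (sum_apply_pow_eq_one hA n) hv hmin
          (fun ℓ => le_sup' (y i) (mem_univ ℓ)) k') hEi
      _ ≤ (1 - ε) * M i + ε * (c / 2) * i := by nlinarith
  obtain ⟨γ, hγ⟩ := exists_eventually_le_linear_of_contraction hε hε₁ hM
  refine tendsto_atBot_mono' _ (hγ.mono fun i hi => (le_sup' (y i) (mem_univ k)).trans hi) ?_
  exact tendsto_atBot_add_const_right _ γ
    (tendsto_natCast_atTop_atTop.const_mul_atTop_of_neg (by linarith))

end Network

section Beliefs

variable {Θ : Type*} [Fintype Θ]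

theorem log_exp_div_sum_sub_log_exp_div_sum (s : Θ → ℝ) (θ θ' : Θ) :
    log (exp (s θ) / ∑ τ, exp (s τ)) - log (exp (s θ') / ∑ τ, exp (s τ)) = s θ - s θ' := by
  have hZ : (∑ τ, exp (s τ)) ≠ 0 := by
    have : Nonempty Θ := ⟨θ⟩
    exact (sum_pos (fun τ _ => exp_pos (s τ)) univ_nonempty).ne'
  rw [log_div (exp_pos _).ne' hZ, log_div (exp_pos _).ne' hZ, log_exp, log_exp]
  ring

theorem log_bayes_sub_log_rest [DecidableEq Θ] {μ lik : Θ → ℝ} (hμ : ∀ θ, 0 < μ θ)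
    (hlik : ∀ θ, 0 < lik θ) {t s : Θ} (hst : s ≠ t) (hflat : ∀ θ, θ ≠ t → μ θ = μ s) {c : ℝ}
    (hc : 0 < c) :
    log (μ t * lik t / ∑ θ, μ θ * lik θ) - log ((1 - μ t * lik t / ∑ θ, μ θ * lik θ) / c)
      = (log (μ t) - log (μ s)) + (log (lik t) - log ((∑ τ ∈ univ.erase t, lik τ) / c)) := by
  set R := ∑ τ ∈ univ.erase t, lik τ
  have hR : 0 < R := sum_pos (fun τ _ => hlik τ) ⟨s, mem_erase.2 ⟨hst, mem_univ s⟩⟩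
  have hZ : ∑ θ, μ θ * lik θ = μ t * lik t + μ s * R := by
    rw [← add_sum_erase _ _ (mem_univ t), mul_sum]
    exact congrArg _ (sum_congr rfl fun τ hτ => by rw [hflat τ (ne_of_mem_erase hτ)])
  have hZ₀ : 0 < μ t * lik t + μ s * R := add_pos (mul_pos (hμ t) (hlik t)) (mul_pos (hμ s) hR)
  have hrest :
      1 - μ t * lik t / (μ t * lik t + μ s * R) = μ s * R / (μ t * lik t + μ s * R) := by
    field_simp; ring
  rw [hZ, hrest, log_div (mul_pos (hμ t) (hlik t)).ne' hZ₀.ne',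
    log_div (div_pos (mul_pos (hμ s) hR) hZ₀).ne' hc.ne', log_div (mul_pos (hμ s) hR).ne' hZ₀.ne',
    log_div hR.ne' hc.ne', log_mul (hμ t).ne' (hlik t).ne', log_mul (hμ s).ne' hR.ne']
  ring

theorem card_sub_one_mul_eq_one_sub [DecidableEq Θ] {p : Θ → ℝ} (hp : ∑ θ, p θ = 1) {t θ : Θ}
    (hflat : ∀ τ, τ ≠ t → p τ = p θ) : ((Fintype.card Θ : ℝ) - 1) * p θ = 1 - p t := by
  rw [← add_sum_erase _ _ (mem_univ t), sum_congr rfl fun τ hτ => hflat τ (ne_of_mem_erase hτ),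
    sum_const, card_erase_of_mem (mem_univ t), card_univ, nsmul_eq_mul,
    Nat.cast_sub (Fintype.card_pos_iff.2 ⟨t⟩)] at hp
  push_cast at hp
  linarith

end Beliefs

/-- `lik k i θ ω` stands for `L_k(ξ_{k,i}(ω)|θ)`; each `ω` is one run of the algorithm. -/
structure IsRunWithoutSelfAwareness {K H : ℕ} {Ω : Type*}
    (lik : Fin K → ℕ → Fin H → Ω → ℝ) (a : Fin K → Fin K → ℝ) (θTX : Fin H)
    (μb ψ ψh : Fin K → ℕ → Fin H → Ω → ℝ) : Prop where
  bayes : ∀ k (i : ℕ) θ ω, ψ k (i + 1) θ ω =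
    μb k i θ ω * lik k (i + 1) θ ω / ∑ θ', μb k i θ' ω * lik k (i + 1) θ' ω
  tx : ∀ k (i : ℕ) ω, ψh k (i + 1) θTX ω = ψ k (i + 1) θTX ω
  ntx : ∀ k (i : ℕ) θ ω, θ ≠ θTX →
    ψh k (i + 1) θ ω = (1 - ψ k (i + 1) θTX ω) / ((H : ℝ) - 1)
  comb : ∀ k (i : ℕ) θ ω, μb k (i + 1) θ ω =
    exp (∑ ℓ, a ℓ k * log (ψh ℓ (i + 1) θ ω)) / ∑ θ', exp (∑ ℓ, a ℓ k * log (ψh ℓ (i + 1) θ' ω))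

namespace IsRunWithoutSelfAwareness

variable {K H : ℕ} {Ω : Type*} {lik : Fin K → ℕ → Fin H → Ω → ℝ} {a : Fin K → Fin K → ℝ}
  {θTX : Fin H} {μb ψ ψh : Fin K → ℕ → Fin H → Ω → ℝ}

theorem pos_succ (run : IsRunWithoutSelfAwareness lik a θTX μb ψ ψh) (k : Fin K) (i : ℕ)
    (θ : Fin H) (ω : Ω) : 0 < μb k (i + 1) θ ω := by
  rw [run.comb]
  exact div_pos (exp_pos _) (sum_pos (fun _ _ => exp_pos _) ⟨θ, mem_univ θ⟩)

theorem sum_succ [Nonempty (Fin H)] (run : IsRunWithoutSelfAwareness lik a θTX μb ψ ψh)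
    (k : Fin K) (i : ℕ) (ω : Ω) : ∑ θ, μb k (i + 1) θ ω = 1 := by
  simp only [run.comb, ← sum_div]
  exact div_self (sum_pos (fun _ _ => exp_pos _) univ_nonempty).ne'

theorem flat_succ (run : IsRunWithoutSelfAwareness lik a θTX μb ψ ψh) {k : Fin K} {i : ℕ}
    {θ θ' : Fin H} {ω : Ω} (hθ : θ ≠ θTX) (hθ' : θ' ≠ θTX) :
    μb k (i + 1) θ ω = μb k (i + 1) θ' ω := by
  simp only [run.comb, run.ntx _ _ _ _ hθ, run.ntx _ _ _ _ hθ']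

theorem log_odds_succ (run : IsRunWithoutSelfAwareness lik a θTX μb ψ ψh)
    (hlik : ∀ k i θ ω, 0 < lik k i θ ω) (hH : 2 ≤ H) {θs : Fin H} (hθs : θs ≠ θTX)
    (ω : Ω) (i : ℕ) :
    (fun k => log (μb k (i + 1 + 1) θTX ω) - log (μb k (i + 1 + 1) θs ω)) =
      ((fun k => log (μb k (i + 1) θTX ω) - log (μb k (i + 1) θs ω)) + fun ℓ =>
        log (lik ℓ (i + 1 + 1) θTX ω) -
          log ((∑ τ ∈ univ.erase θTX, lik ℓ (i + 1 + 1) τ ω) / ((H : ℝ) - 1))) ᵥ* Matrix.of a := by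
  have hH₁ : (0 : ℝ) < H - 1 := by
    have : (2 : ℝ) ≤ H := by exact_mod_cast hH
    linarith
  funext k
  rw [run.comb k (i + 1) θTX ω, run.comb k (i + 1) θs ω,
    log_exp_div_sum_sub_log_exp_div_sum fun θ => ∑ ℓ, a ℓ k * log (ψh ℓ (i + 1 + 1) θ ω),
    ← sum_sub_distrib]
  refine sum_congr rfl fun ℓ _ => ?_
  rw [← mul_sub, run.tx, run.ntx _ _ _ _ hθs, run.bayes,
    log_bayes_sub_log_rest (fun θ => run.pos_succ ℓ i θ ω) (fun θ => hlik ℓ _ θ ω) hθs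
      (fun θ hθ => run.flat_succ hθ hθs) hH₁, mul_comm]
  rfl

theorem tendsto_of_log_odds_tendsto_atBot (run : IsRunWithoutSelfAwareness lik a θTX μb ψ ψh)
    (hH : 2 ≤ H) {θs : Fin H} {k : Fin K} {ω : Ω}
    (h : Tendsto (fun i => log (μb k (i + 1) θTX ω) - log (μb k (i + 1) θs ω)) atTop atBot) :
    Tendsto (fun i => μb k i θTX ω) atTop (𝓝 0) ∧
      ∀ θ, θ ≠ θTX → Tendsto (fun i => μb k i θ ω) atTop (𝓝 (1 / ((H : ℝ) - 1))) := by
  have : Nonempty (Fin H) := ⟨θTX⟩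
  have hle : ∀ i,
      μb k (i + 1) θTX ω ≤ exp (log (μb k (i + 1) θTX ω) - log (μb k (i + 1) θs ω)) := by
    intro i
    have hs₁ : μb k (i + 1) θs ω ≤ 1 := run.sum_succ k i ω ▸
      single_le_sum (fun θ _ => (run.pos_succ k i θ ω).le) (mem_univ θs)
    rw [exp_sub, exp_log (run.pos_succ k i θTX ω), exp_log (run.pos_succ k i θs ω),
      le_div_iff₀ (run.pos_succ k i θs ω)]
    exact mul_le_of_le_one_right (run.pos_succ k i θTX ω).le hs₁
  have htx : Tendsto (fun i => μb k (i + 1) θTX ω) atTop (𝓝 0) :=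
    tendsto_of_tendsto_of_tendsto_of_le_of_le tendsto_const_nhds (tendsto_exp_atBot.comp h)
      (fun i => (run.pos_succ k i θTX ω).le) hle
  refine ⟨(tendsto_add_atTop_iff_nat 1).1 htx, fun θ hθ => (tendsto_add_atTop_iff_nat 1).1 ?_⟩
  have hH₁ : (H : ℝ) - 1 ≠ 0 := by
    have : (2 : ℝ) ≤ H := by exact_mod_cast hH
    linarith
  have hflat : ∀ i, μb k (i + 1) θ ω = (1 - μb k (i + 1) θTX ω) / ((H : ℝ) - 1) := fun i => by
    rw [eq_div_iff hH₁, mul_comm, ← card_sub_one_mul_eq_one_sub (run.sum_succ k i ω)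
      fun τ hτ => run.flat_succ hτ hθ, Fintype.card_fin]
  simp only [hflat]
  simpa using ((tendsto_const_nhds (x := (1 : ℝ))).sub htx).div_const ((H : ℝ) - 1)

end IsRunWithoutSelfAwareness

theorem abs_log_div_mean_le_sum {ι : Type*} {s : Finset ι} (hs : s.Nonempty) {b : ι → ℝ}
    (hb : ∀ τ ∈ s, 0 < b τ) {r : ℝ} (hr : 0 < r) :
    |log (r / ((∑ τ ∈ s, b τ) / #s))| ≤ ∑ τ ∈ s, |log (r / b τ)| := by
  obtain ⟨τ₁, hτ₁, hmax⟩ := s.exists_max_image b hs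
  obtain ⟨τ₂, hτ₂, hmin⟩ := s.exists_min_image b hs
  have hcard : (0 : ℝ) < #s := by exact_mod_cast hs.card_pos
  have hm₁ : (∑ τ ∈ s, b τ) / #s ≤ b τ₁ := by
    rw [div_le_iff₀' hcard, ← nsmul_eq_mul]; exact sum_le_card_nsmul _ _ _ hmax
  have hm₂ : b τ₂ ≤ (∑ τ ∈ s, b τ) / #s := by
    rw [le_div_iff₀' hcard, ← nsmul_eq_mul]; exact card_nsmul_le_sum _ _ _ hmin
  have hm : 0 < (∑ τ ∈ s, b τ) / #s := (hb τ₂ hτ₂).trans_le hm₂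
  have h₁ := log_le_log (div_pos hr (hb τ₁ hτ₁)) (div_le_div_of_nonneg_left hr.le hm hm₁)
  have h₂ := log_le_log (div_pos hr hm) (div_le_div_of_nonneg_left hr.le (hb τ₂ hτ₂) hm₂)
  calc _ ≤ max |log (r / b τ₁)| |log (r / b τ₂)| := abs_le_max_abs_abs h₁ h₂
    _ ≤ _ := max_le (single_le_sum (f := fun τ => |log (r / b τ)|) (fun _ _ => abs_nonneg _) hτ₁)
        (single_le_sum (f := fun τ => |log (r / b τ)|) (fun _ _ => abs_nonneg _) hτ₂)

section Probability

variable {Ω E : Type*} [MeasurableSpace Ω] [MeasurableSpace E] {P : Measure Ω} {ν : Measure E}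

theorem integrable_comp_of_map_eq_withDensity {Y : Ω → E} (hY : Measurable Y) {ρ : E → ℝ}
    (hρ : Measurable ρ) (hρ₀ : ∀ x, 0 ≤ ρ x)
    (hmap : P.map Y = ν.withDensity fun x => ENNReal.ofReal (ρ x)) {g : E → ℝ}
    (hg : Measurable g) (hint : Integrable (fun x => ρ x * g x) ν) :
    Integrable (fun ω => g (Y ω)) P := by
  refine (integrable_map_measure hg.aestronglyMeasurable hY.aemeasurable).1 ?_
  rw [hmap, integrable_withDensity_iff (by fun_prop) (ae_of_all _ fun _ => ENNReal.ofReal_lt_top)]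
  refine hint.congr (ae_of_all _ fun x => ?_)
  simp [ENNReal.toReal_ofReal (hρ₀ x), mul_comm]

theorem integrable_mul_log_div_mean {Θ : Type*} {ρ : E → ℝ} {L : Θ → E → ℝ}
    (hρ : ∀ x, 0 < ρ x) (hL : ∀ τ x, 0 < L τ x) (hρm : Measurable ρ)
    (hLm : ∀ τ, Measurable (L τ)) {s : Finset Θ} (hs : s.Nonempty)
    (hKL : ∀ τ ∈ s, Integrable (fun x => ρ x * log (ρ x / L τ x)) ν) :
    Integrable (fun x => ρ x * log (ρ x / ((∑ τ ∈ s, L τ x) / #s))) ν := by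
  refine (integrable_finsetSum s fun τ hτ => (hKL τ hτ).abs).mono' (by fun_prop)
    (ae_of_all _ fun x => ?_)
  calc ‖ρ x * log (ρ x / ((∑ τ ∈ s, L τ x) / #s))‖
      = ρ x * |log (ρ x / ((∑ τ ∈ s, L τ x) / #s))| := by
        rw [norm_mul, norm_of_nonneg (hρ x).le, norm_eq_abs]
    _ ≤ ρ x * ∑ τ ∈ s, |log (ρ x / L τ x)| :=
        mul_le_mul_of_nonneg_left (abs_log_div_mean_le_sum hs (fun τ _ => hL τ x) (hρ x))
          (hρ x).le
    _ = ∑ τ ∈ s, |ρ x * log (ρ x / L τ x)| := by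
        simp only [mul_sum, abs_mul, abs_of_pos (hρ x)]

theorem integrable_and_integral_log_sub_log_mean_comp {Θ : Type*} {L : Θ → E → ℝ}
    (hL : ∀ τ x, 0 < L τ x) (hLm : ∀ τ, Measurable (L τ)) {θ₀ : Θ} {Y : Ω → E} (hY : Measurable Y)
    (hmap : P.map Y = ν.withDensity fun x => ENNReal.ofReal (L θ₀ x))
    (hKL : ∀ τ, Integrable (fun x => L θ₀ x * log (L θ₀ x / L τ x)) ν) (t : Θ)
    {s : Finset Θ} (hs : s.Nonempty) {c : ℝ} (hc : (#s : ℝ) = c) :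
    Integrable (fun ω => log (L t (Y ω)) - log ((∑ τ ∈ s, L τ (Y ω)) / c)) P ∧
      ∫ ω, log (L t (Y ω)) - log ((∑ τ ∈ s, L τ (Y ω)) / c) ∂P =
        ∫ ω, log (L θ₀ (Y ω) / ((∑ τ ∈ s, L τ (Y ω)) / c)) ∂P -
          ∫ ω, log (L θ₀ (Y ω) / L t (Y ω)) ∂P := by
  subst hc
  have hmean := integrable_comp_of_map_eq_withDensity hY (hLm θ₀) (fun x => (hL θ₀ x).le) hmap
    (by fun_prop) (integrable_mul_log_div_mean (hL θ₀) hL (hLm θ₀) hLm hs fun τ _ => hKL τ)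
  have ht := integrable_comp_of_map_eq_withDensity hY (hLm θ₀) (fun x => (hL θ₀ x).le) hmap
    (by fun_prop) (hKL t)
  have heq : ∀ ω, log (L t (Y ω)) - log ((∑ τ ∈ s, L τ (Y ω)) / #s) =
      log (L θ₀ (Y ω) / ((∑ τ ∈ s, L τ (Y ω)) / #s)) - log (L θ₀ (Y ω) / L t (Y ω)) := by
    intro ω
    have hcard : (0 : ℝ) < #s := by exact_mod_cast hs.card_pos
    have hmean_pos := div_pos (sum_pos (fun τ _ => hL τ (Y ω)) hs) hcard
    rw [log_div (hL θ₀ _).ne' hmean_pos.ne', log_div (hL θ₀ _).ne' (hL t _).ne']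
    ring
  simp only [heq]
  exact ⟨hmean.sub ht, integral_sub hmean ht⟩

theorem ae_tendsto_cesaro_comp {Y : ℕ → Ω → E} {Z : Ω → E}
    (hindep : Pairwise fun i j => IndepFun (Y i) (Y j) P) (hident : ∀ i, IdentDistrib (Y i) Z P P)
    {g : E → ℝ} (hg : Measurable g) (hint : Integrable (fun ω => g (Z ω)) P) :
    ∀ᵐ ω ∂P, Tendsto (fun i : ℕ => (i : ℝ)⁻¹ • ∑ j ∈ range i, g (Y j ω)) atTop
      (𝓝 (∫ ω, g (Z ω) ∂P)) := by
  have hident₀ := (hident 0).comp hg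
  have := strong_law_ae (fun i ω => g (Y i ω)) (hident₀.integrable_iff.2 hint)
    (fun i j hij => (hindep hij).comp hg hg) fun i => ((hident i).trans (hident 0).symm).comp hg
  rwa [show ∫ ω, g (Y 0 ω) ∂P = ∫ ω, g (Z ω) ∂P from hident₀.integral_eq] at this

end Probability

theorem truth_learning_without_self_awareness_of_distinguishable_tx_general
    {Ω : Type} [mΩ : MeasurableSpace Ω] (P : Measure Ω)
    (K H : ℕ) (hH : 2 ≤ H)
    (X : Fin K → Type) [∀ k, MeasurableSpace (X k)]
    (ν : ∀ k, Measure (X k))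
    (L : ∀ k : Fin K, Fin H → X k → ℝ)
    (θ0 : Fin H)
    (hLpos : ∀ k θ x, 0 < L k θ x)
    (hLmeas : ∀ k θ, Measurable (L k θ))
    (ξ : ∀ k : Fin K, ℕ → Ω → X k)
    (hξmeas : ∀ k i, Measurable (ξ k i))
    (hξdist : ∀ k (i : ℕ), 1 ≤ i →
      Measure.map (ξ k i) P = (ν k).withDensity (fun x => ENNReal.ofReal (L k θ0 x)))
    (hξindep : iIndepFun
      (fun (i : ℕ) (ω : Ω) (k : Fin K) => ξ k (i + 1) ω) P)
    (hKL : ∀ k θ θ',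
      Integrable (fun x => L k θ x * Real.log (L k θ x / L k θ' x)) (ν k))
    (a : Fin K → Fin K → ℝ)
    (ha_stoch : ∀ k, ∑ ℓ, a ℓ k = 1)
    (ha_prim : ∃ n : ℕ, ∀ ℓ k, 0 < ((Matrix.of a) ^ n) ℓ k)
    (v : Fin K → ℝ)
    (hv_pos : ∀ ℓ, 0 < v ℓ)
    (hv_sum : ∑ ℓ, v ℓ = 1)
    (hv_eig : ∀ ℓ, ∑ k, a ℓ k * v k = v ℓ)
    (θTX : Fin H)
    (μb ψ ψh : Fin K → ℕ → Fin H → Ω → ℝ)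
    (hψ : ∀ k (i : ℕ) θ ω, ψ k (i + 1) θ ω =
      μb k i θ ω * L k θ (ξ k (i + 1) ω) /
        ∑ θ', μb k i θ' ω * L k θ' (ξ k (i + 1) ω))
    (hψh_tx : ∀ k (i : ℕ) ω, ψh k (i + 1) θTX ω = ψ k (i + 1) θTX ω)
    (hψh_ntx : ∀ k (i : ℕ) θ ω, θ ≠ θTX →
      ψh k (i + 1) θ ω = (1 - ψ k (i + 1) θTX ω) / ((H : ℝ) - 1))
    (hcomb : ∀ k (i : ℕ) θ ω, μb k (i + 1) θ ω =
      Real.exp (∑ ℓ, a ℓ k * Real.log (ψh ℓ (i + 1) θ ω)) /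
        ∑ θ', Real.exp (∑ ℓ, a ℓ k * Real.log (ψh ℓ (i + 1) θ' ω)))
    (hgap : (∑ m, v m * (∫ ω, Real.log (L m θ0 (ξ m 1 ω) / ((∑ τ ∈ Finset.univ.erase θTX, L m τ (ξ m 1 ω)) / ((H : ℝ) - 1))) ∂P)) < (∑ m, v m * (∫ ω, Real.log (L m θ0 (ξ m 1 ω) / L m θTX (ξ m 1 ω)) ∂P))) :
    ∀ k : Fin K,
      (∀ᵐ ω ∂P, Tendsto (fun (i : ℕ) => μb k i θTX ω) atTop (𝓝 0)) ∧
      (∀ θ : Fin H, θ ≠ θTX →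
        ∀ᵐ ω ∂P, Tendsto (fun (i : ℕ) => μb k i θ ω) atTop (𝓝 (1 / ((H : ℝ) - 1)))) := by
  obtain ⟨n, hn⟩ := ha_prim
  obtain ⟨θs, hθs⟩ := Fintype.exists_ne_of_one_lt_card (by rw [Fintype.card_fin]; omega) θTX
  have run : IsRunWithoutSelfAwareness (fun k i θ ω => L k θ (ξ k i ω)) a θTX μb ψ ψh :=
    ⟨hψ, hψh_tx, hψh_ntx, hcomb⟩
  -- `F ℓ x = log L_ℓ(x|θTX) - log L_ℓ(x|θ̄TX)`
  set F : ∀ ℓ, X ℓ → ℝ := fun ℓ x =>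
    log (L ℓ θTX x) - log ((∑ τ ∈ univ.erase θTX, L ℓ τ x) / ((H : ℝ) - 1))
  have hdrift := fun ℓ => integrable_and_integral_log_sub_log_mean_comp (hLpos ℓ) (hLmeas ℓ)
    (hξmeas ℓ 1) (hξdist ℓ 1 le_rfl) (hKL ℓ θ0) θTX ⟨θs, mem_erase.2 ⟨hθs, mem_univ θs⟩⟩
    (by simp [Nat.cast_sub (by omega : 1 ≤ H)] : (#(univ.erase θTX) : ℝ) = H - 1)
  have he : v ⬝ᵥ (fun ℓ => ∫ ω, F ℓ (ξ ℓ 1 ω) ∂P) < 0 := by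
    simp only [dotProduct, F, fun ℓ => (hdrift ℓ).2, mul_sub, sum_sub_distrib]
    exact sub_neg.2 hgap
  have hslln : ∀ᵐ ω ∂P, ∀ ℓ,
      Tendsto (fun i : ℕ => (i : ℝ)⁻¹ • ∑ j ∈ range i, F ℓ (ξ ℓ (j + 1 + 1) ω)) atTop
        (𝓝 (∫ ω, F ℓ (ξ ℓ 1 ω) ∂P)) :=
    ae_all_iff.2 fun ℓ => ae_tendsto_cesaro_comp (Y := fun j => ξ ℓ (j + 1 + 1))
      (fun i j hij => (hξindep.indepFun (by simpa using hij)).comp (measurable_pi_apply ℓ)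
        (measurable_pi_apply ℓ))
      (fun i => ⟨(hξmeas ℓ _).aemeasurable, (hξmeas ℓ 1).aemeasurable,
        by rw [hξdist ℓ _ (by omega), hξdist ℓ 1 le_rfl]⟩)
      (by fun_prop) (hdrift ℓ).1
  have hlog_odds : ∀ᵐ ω ∂P, ∀ k, Tendsto
      (fun i => log (μb k (i + 1) θTX ω) - log (μb k (i + 1) θs ω)) atTop atBot := by
    filter_upwards [hslln] with ω hω k
    exact tendsto_atBot_of_diffusion_recursion (A := Matrix.of a)
      (y := fun i k => log (μb k (i + 1) θTX ω) - log (μb k (i + 1) θs ω)) ha_stoch hn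
      (fun ℓ => (hv_pos ℓ).le) hv_sum (funext hv_eig)
      (run.log_odds_succ (fun k i θ ω => hLpos k θ _) hH hθs ω)
      (tendsto_pi_nhds.2 fun ℓ => by simpa only [Pi.smul_apply, Finset.sum_apply] using hω ℓ) he k
  intro k
  refine ⟨?_, fun θ hθ => ?_⟩ <;> filter_upwards [hlog_odds] with ω hω
  · exact (run.tendsto_of_log_odds_tendsto_atBot hH (hω k)).1
  · exact (run.tendsto_of_log_odds_tendsto_atBot hH (hω k)).2 θ hθ

theorem truth_learning_without_self_awareness_of_distinguishable_tx
    {Ω : Type} [mΩ : MeasurableSpace Ω] (P : Measure Ω) [IsProbabilityMeasure P]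
    (K H : ℕ) (hK : 0 < K) (hH : 2 ≤ H)
    (X : Fin K → Type) [∀ k, MeasurableSpace (X k)]
    (ν : ∀ k, Measure (X k))
    (L : ∀ k : Fin K, Fin H → X k → ℝ)
    (θ0 : Fin H)
    (hLpos : ∀ k θ x, 0 < L k θ x)
    (hLmeas : ∀ k θ, Measurable (L k θ))
    (hLdens : ∀ k θ, ∫ x, L k θ x ∂(ν k) = 1)
    (ξ : ∀ k : Fin K, ℕ → Ω → X k)
    (hξmeas : ∀ k i, Measurable (ξ k i))
    (hξdist : ∀ k (i : ℕ), 1 ≤ i →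
      Measure.map (ξ k i) P = (ν k).withDensity (fun x => ENNReal.ofReal (L k θ0 x)))
    (hξindep : iIndepFun
      (fun (i : ℕ) (ω : Ω) (k : Fin K) => ξ k (i + 1) ω) P)
    (hKL : ∀ k θ θ',
      Integrable (fun x => L k θ x * Real.log (L k θ x / L k θ' x)) (ν k))
    (a : Fin K → Fin K → ℝ)
    (ha_nonneg : ∀ ℓ k, 0 ≤ a ℓ k)
    (ha_stoch : ∀ k, ∑ ℓ, a ℓ k = 1)
    (ha_prim : ∃ n : ℕ, ∀ ℓ k, 0 < ((Matrix.of a) ^ n) ℓ k)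
    (v : Fin K → ℝ)
    (hv_pos : ∀ ℓ, 0 < v ℓ)
    (hv_sum : ∑ ℓ, v ℓ = 1)
    (hv_eig : ∀ ℓ, ∑ k, a ℓ k * v k = v ℓ)
    (θTX : Fin H)
    (μb ψ ψh : Fin K → ℕ → Fin H → Ω → ℝ)
    (μinit : Fin K → Fin H → ℝ)
    (hμinit_pos : ∀ k θ, 0 < μinit k θ)
    (hμinit_sum : ∀ k, ∑ θ, μinit k θ = 1)
    (hμb0 : ∀ k θ ω, μb k 0 θ ω = μinit k θ)
    (hψ : ∀ k (i : ℕ) θ ω, ψ k (i + 1) θ ω =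
      μb k i θ ω * L k θ (ξ k (i + 1) ω) /
        ∑ θ', μb k i θ' ω * L k θ' (ξ k (i + 1) ω))
    (hψh_tx : ∀ k (i : ℕ) ω, ψh k (i + 1) θTX ω = ψ k (i + 1) θTX ω)
    (hψh_ntx : ∀ k (i : ℕ) θ ω, θ ≠ θTX →
      ψh k (i + 1) θ ω = (1 - ψ k (i + 1) θTX ω) / ((H : ℝ) - 1))
    (hcomb : ∀ k (i : ℕ) θ ω, μb k (i + 1) θ ω =
      Real.exp (∑ ℓ, a ℓ k * Real.log (ψh ℓ (i + 1) θ ω)) /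
        ∑ θ', Real.exp (∑ ℓ, a ℓ k * Real.log (ψh ℓ (i + 1) θ' ω)))
    (hgap : (∑ m, v m * (∫ ω, Real.log (L m θ0 (ξ m 1 ω) / ((∑ τ ∈ Finset.univ.erase θTX, L m τ (ξ m 1 ω)) / ((H : ℝ) - 1))) ∂P)) < (∑ m, v m * (∫ ω, Real.log (L m θ0 (ξ m 1 ω) / L m θTX (ξ m 1 ω)) ∂P))) :
    ∀ k : Fin K,
      (∀ᵐ ω ∂P, Tendsto (fun (i : ℕ) => μb k i θTX ω) atTop (𝓝 0)) ∧
      (∀ θ : Fin H, θ ≠ θTX →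
        ∀ᵐ ω ∂P, Tendsto (fun (i : ℕ) => μb k i θ ω) atTop (𝓝 (1 / ((H : ℝ) - 1)))) :=
  truth_learning_without_self_awareness_of_distinguishable_tx_general (mΩ := mΩ) P K H hH X ν L θ0
    hLpos hLmeas ξ hξmeas hξdist hξindep hKL a ha_stoch ha_prim v hv_pos hv_sum hv_eig θTX μb ψ ψh
    hψ hψh_tx hψh_ntx hcomb hgap
end

section
/- Theorem 3, part 2 (Mislearning without self-awareness when the transmitted hypothesis is close to the truth). Suppose the agents run the partial-information algorithm without self-awareness with transmitted hypothesis θ_TX, and assume Assumptions 1 and 2. If d_ave(θ_TX) < d_ave(θ̄_TX), then for every agent k, μ_{k,i}(θ_TX) → 1 almost surely. -/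
/-!
After one round every belief is flat off `θTX`, so the state of agent `k` at time `i` is the
log-ratio `x i k = log (μ_{k,i}(θTX) / μ_{k,i}(θ))` for any fixed `θ ≠ θTX`. Projecting the Bayes
posterior onto `θTX` turns the true likelihood of the other hypotheses into the fictitious one,
and geometric pooling then gives the linear recursion `x (i+1) = (x i + y i) ᵥ* A` with
`y i ℓ = log (L_ℓ(ξ|θTX) / L_ℓ(ξ|θ̄TX))`, i.i.d. in time with mean `d_ℓ(θ̄TX) - d_ℓ(θTX)`.
The Perron average `v ⬝ᵥ x i` is a random walk whose drift `d_ave(θ̄TX) - d_ave(θTX)` is positive,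
so it grows linearly by the strong law, while a positive power of `A` contracts the spread
`max x - min x`, which is therefore `o(i)`. Every `x i k` thus tends to `+∞`, i.e.
`μ_{k,i}(θTX) → 1`.
-/

open MeasureTheory ProbabilityTheory Filter Topology Finset Matrix

namespace SocialLearning

section Sequences

lemma tendsto_div_natCast_of_forall_eventually_le {u : ℕ → ℝ} (hu : ∀ i, 0 ≤ u i)
    (h : ∀ ε > 0, ∀ᶠ i : ℕ in atTop, u i ≤ ε * i) :
    Tendsto (fun i => u i / i) atTop (𝓝 0) := by
  refine tendsto_order.2 ⟨fun a ha => Eventually.of_forall fun i =>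
    ha.trans_le (div_nonneg (hu i) i.cast_nonneg), fun a ha => ?_⟩
  filter_upwards [h (a / 2) (half_pos ha), eventually_gt_atTop 0] with i hi hi0
  have hi0' : (0 : ℝ) < i := by exact_mod_cast hi0
  rw [div_lt_iff₀ hi0']
  linarith [mul_lt_mul_of_pos_right (half_lt_self ha) hi0']

/-- The strong induction keeps the invariant `u i ≤ D + C i`, with `C = n ε' / (1 - c)` chosen
so that `c C + n ε' = C`. -/
lemma tendsto_div_natCast_of_le_mul_add_sum {u b : ℕ → ℝ} {c : ℝ} {n : ℕ} (hn : 0 < n)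
    (hc0 : 0 ≤ c) (hc1 : c < 1) (hu : ∀ i, 0 ≤ u i)
    (hrec : ∀ i, u (i + n) ≤ c * u i + ∑ t ∈ range n, b (i + t))
    (hb : Tendsto (fun i => b i / i) atTop (𝓝 0)) :
    Tendsto (fun i => u i / i) atTop (𝓝 0) := by
  refine tendsto_div_natCast_of_forall_eventually_le hu fun ε hε => ?_
  have hn' : (0 : ℝ) < n := by exact_mod_cast hn
  set C := ε / 2
  set ε' := (1 - c) * C / n
  have hc1' : 0 < 1 - c := by linarith
  have hε' : 0 < ε' := by positivity
  have hnε' : n * ε' = (1 - c) * C := by simp only [ε']; field_simp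
  have hbJ : ∀ᶠ j : ℕ in atTop, b j ≤ ε' * j := by
    filter_upwards [hb.eventually (gt_mem_nhds hε'), eventually_gt_atTop 0] with j hj hj0
    exact ((div_lt_iff₀ (by exact_mod_cast hj0)).1 hj).le
  obtain ⟨J, hJ⟩ := eventually_atTop.1 hbJ
  set D := ∑ j ∈ range (J + n), u j
  have hD : 0 ≤ D := sum_nonneg fun j _ => hu j
  have key : ∀ i, J ≤ i → u i ≤ D + C * i := by
    intro i
    induction i using Nat.strong_induction_on with
    | _ i ih =>
      intro hi
      by_cases hlt : i < J + n
      · have : u i ≤ D := single_le_sum (fun j _ => hu j) (mem_range.2 hlt)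
        have : 0 ≤ C * i := by positivity
        linarith
      obtain ⟨i, rfl⟩ : ∃ i', i = i' + n := ⟨i - n, by omega⟩
      have hwindow : ∑ t ∈ range n, b (i + t) ≤ n * (ε' * (i + n : ℕ)) := by
        have := sum_le_card_nsmul (range n) (fun t => b (i + t)) (ε' * (i + n : ℕ))
          fun t ht => (hJ _ (by omega)).trans <| mul_le_mul_of_nonneg_left
            (by exact_mod_cast (by simp at ht; omega : i + t ≤ i + n)) hε'.le
        simpa using this
      have hi' : (0 : ℝ) ≤ i := i.cast_nonneg
      have h1 := ih i (by omega) (by omega)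
      calc u (i + n) ≤ c * u i + ∑ t ∈ range n, b (i + t) := hrec i
        _ ≤ c * (D + C * i) + n * (ε' * (i + n : ℕ)) := by gcongr
        _ = c * D + C * (i + n : ℕ) - c * C * n := by
          push_cast
          linear_combination (i + (n : ℝ)) * hnε'
        _ ≤ D + C * (i + n : ℕ) := by
          nlinarith [mul_nonneg (mul_nonneg hc0 (by positivity : 0 ≤ C)) hn'.le]
  filter_upwards [eventually_ge_atTop J,
    tendsto_natCast_atTop_atTop.eventually_ge_atTop (D / C)] with i hiJ hiD
  have : D ≤ C * i := by rwa [div_le_iff₀ (by positivity), mul_comm] at hiD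
  have : ε * i = 2 * (C * i) := by simp only [C]; ring
  linarith [key i hiJ]

lemma tendsto_div_natCast_of_tendsto_sum_range_div {y : ℕ → ℝ} {m : ℝ}
    (h : Tendsto (fun i => (∑ t ∈ range i, y t) / i) atTop (𝓝 m)) :
    Tendsto (fun i => y i / i) atTop (𝓝 0) := by
  have h1 : Tendsto (fun i : ℕ => (∑ t ∈ range (i + 1), y t) / ((i + 1 : ℕ) : ℝ)) atTop (𝓝 m) :=
    h.comp (tendsto_add_atTop_nat 1)
  have h2 := (h1.mul
    ((tendsto_const_nhds (x := (1 : ℝ))).add tendsto_one_div_atTop_nhds_zero_nat)).sub h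
  rw [add_zero, mul_one, sub_self] at h2
  refine h2.congr' ?_
  filter_upwards [eventually_gt_atTop 0] with i hi
  have : (i : ℝ) ≠ 0 := by positivity
  rw [sum_range_succ]
  push_cast
  field_simp
  ring

end Sequences

section Spread

variable {ι : Type*} [Fintype ι] [Nonempty ι]

noncomputable def spread (x : ι → ℝ) : ℝ :=
  univ.sup' univ_nonempty x - univ.inf' univ_nonempty x

lemma sub_le_spread (x : ι → ℝ) (i j : ι) : x i - x j ≤ spread x :=
  sub_le_sub (le_sup' x (mem_univ i)) (inf'_le x (mem_univ j))

lemma exists_spread_eq (x : ι → ℝ) : ∃ i j, spread x = x i - x j := by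
  obtain ⟨i, -, hi⟩ := exists_mem_eq_sup' univ_nonempty x
  obtain ⟨j, -, hj⟩ := exists_mem_eq_inf' univ_nonempty x
  exact ⟨i, j, by rw [spread, hi, hj]⟩

lemma spread_nonneg (x : ι → ℝ) : 0 ≤ spread x := by
  obtain ⟨i⟩ := ‹Nonempty ι›
  simpa using sub_le_spread x i i

lemma spread_zero : spread (0 : ι → ℝ) = 0 := by
  obtain ⟨i, j, h⟩ := exists_spread_eq (0 : ι → ℝ)
  simpa using h

lemma spread_add_le (x y : ι → ℝ) : spread (x + y) ≤ spread x + spread y := by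
  obtain ⟨i, j, h⟩ := exists_spread_eq (x + y)
  rw [h, Pi.add_apply, Pi.add_apply]
  linarith [sub_le_spread x i j, sub_le_spread y i j]

lemma spread_le_two_mul_sum_abs (x : ι → ℝ) : spread x ≤ 2 * ∑ i, |x i| := by
  obtain ⟨i, j, h⟩ := exists_spread_eq x
  have hle : ∀ k, |x k| ≤ ∑ i, |x i| := fun k =>
    single_le_sum (f := fun i => |x i|) (fun i _ => abs_nonneg (x i)) (mem_univ k)
  rw [h]
  linarith [hle i, hle j, le_abs_self (x i), neg_abs_le (x j)]

lemma inf'_le_dotProduct {w : ι → ℝ} (hw0 : ∀ i, 0 ≤ w i) (hw1 : ∑ i, w i = 1) (x : ι → ℝ) :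
    univ.inf' univ_nonempty x ≤ w ⬝ᵥ x :=
  calc univ.inf' univ_nonempty x = ∑ i, w i * univ.inf' univ_nonempty x := by
        rw [← sum_mul, hw1, one_mul]
    _ ≤ w ⬝ᵥ x := sum_le_sum fun i _ => mul_le_mul_of_nonneg_left (inf'_le x (mem_univ i)) (hw0 i)

lemma dotProduct_le_sup' {w : ι → ℝ} (hw0 : ∀ i, 0 ≤ w i) (hw1 : ∑ i, w i = 1) (x : ι → ℝ) :
    w ⬝ᵥ x ≤ univ.sup' univ_nonempty x :=
  calc w ⬝ᵥ x ≤ ∑ i, w i * univ.sup' univ_nonempty x :=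
        sum_le_sum fun i _ => mul_le_mul_of_nonneg_left (le_sup' x (mem_univ i)) (hw0 i)
    _ = univ.sup' univ_nonempty x := by rw [← sum_mul, hw1, one_mul]

lemma abs_sub_dotProduct_le_spread {w : ι → ℝ} (hw0 : ∀ i, 0 ≤ w i) (hw1 : ∑ i, w i = 1)
    (x : ι → ℝ) (k : ι) : |x k - w ⬝ᵥ x| ≤ spread x := by
  have := inf'_le_dotProduct hw0 hw1 x
  have := dotProduct_le_sup' hw0 hw1 x
  have := inf'_le x (mem_univ k)
  have := le_sup' x (mem_univ k)
  rw [abs_sub_le_iff, spread]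
  constructor <;> linarith

variable [DecidableEq ι]

/-- Dobrushin-type contraction: a column of `B` puts weight at least `ε` on a minimiser of `x`. -/
lemma spread_vecMul_le {B : Matrix ι ι ℝ} (hB : B ∈ colStochastic ℝ ι) {ε : ℝ}
    (hε : ∀ i j, ε ≤ B i j) (x : ι → ℝ) : spread (x ᵥ* B) ≤ (1 - ε) * spread x := by
  obtain ⟨j, j', h⟩ := exists_spread_eq (x ᵥ* B)
  obtain ⟨i₀, -, hi₀⟩ := exists_mem_eq_inf' univ_nonempty x
  set M := univ.sup' univ_nonempty x
  have hcol : ∀ j, (x ᵥ* B) j = (fun i => B i j) ⬝ᵥ x := fun j => dotProduct_comm _ _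
  have hgap : ∀ i, 0 ≤ M - x i := fun i => sub_nonneg.2 (le_sup' x (mem_univ i))
  have hupper : (x ᵥ* B) j = M - ∑ i, B i j * (M - x i) := by
    simp only [hcol, dotProduct, mul_sub, sum_sub_distrib, ← sum_mul,
      sum_col_of_mem_colStochastic hB, one_mul]
    ring
  have hweight : ε * (M - x i₀) ≤ ∑ i, B i j * (M - x i) :=
    (mul_le_mul_of_nonneg_right (hε i₀ j) (hgap i₀)).trans
      (single_le_sum (f := fun i => B i j * (M - x i))
        (fun i _ => mul_nonneg (hB.1 i j) (hgap i)) (mem_univ i₀))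
  have hlower := inf'_le_dotProduct (fun i => hB.1 i j') (sum_col_of_mem_colStochastic hB j') x
  have hspread : spread x = M - x i₀ := by rw [spread, hi₀]
  rw [h, hcol j', hupper, hspread]
  rw [hi₀] at hlower
  linarith

end Spread

section Consensus

variable {ι : Type*} [Fintype ι] {A : Matrix ι ι ℝ} {x y : ℕ → ι → ℝ}

lemma dotProduct_eq_add_sum_of_vecMul_recursion {v : ι → ℝ} (hAv : A *ᵥ v = v)
    (hxy : ∀ i, x (i + 1) = (x i + y i) ᵥ* A) (i : ℕ) :
    v ⬝ᵥ x i = v ⬝ᵥ x 0 + ∑ t ∈ range i, v ⬝ᵥ y t := by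
  induction i with
  | zero => simp
  | succ i ih =>
    rw [hxy, dotProduct_comm, ← dotProduct_mulVec, hAv, dotProduct_comm, dotProduct_add, ih,
      sum_range_succ, add_assoc]

variable [DecidableEq ι]

lemma exists_pos_le_pow_apply [Nonempty ι] (hA : A ∈ colStochastic ℝ ι)
    (hprim : ∃ n, ∀ i j, 0 < (A ^ n) i j) :
    ∃ n ε, 0 < n ∧ 0 < ε ∧ ∀ i j, ε ≤ (A ^ n) i j := by
  obtain ⟨n, hn⟩ := hprim
  set ε := univ.inf' univ_nonempty fun p : ι × ι => (A ^ n) p.1 p.2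
  have hε : ∀ i j, ε ≤ (A ^ n) i j := fun i j => inf'_le _ (mem_univ (i, j))
  refine ⟨n + 1, ε, n.succ_pos, (lt_inf'_iff _).2 fun p _ => hn p.1 p.2, fun i j => ?_⟩
  calc ε = ∑ l, ε * A l j := by rw [← mul_sum, sum_col_of_mem_colStochastic hA, mul_one]
    _ ≤ ∑ l, (A ^ n) i l * A l j :=
        sum_le_sum fun l _ => mul_le_mul_of_nonneg_right (hε i l) (hA.1 l j)
    _ = (A ^ (n + 1)) i j := by rw [pow_succ, mul_apply]

variable [Nonempty ι]

lemma spread_sub_vecMul_pow_le (hA : A ∈ colStochastic ℝ ι)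
    (hxy : ∀ i, x (i + 1) = (x i + y i) ᵥ* A) (i m : ℕ) :
    spread (x (i + m) - x i ᵥ* A ^ m) ≤ ∑ t ∈ range m, spread (y (i + t)) := by
  induction m with
  | zero => simp [spread_zero]
  | succ m ih =>
    have hstep : x (i + (m + 1)) - x i ᵥ* A ^ (m + 1)
        = (x (i + m) - x i ᵥ* A ^ m + y (i + m)) ᵥ* A := by
      rw [← add_assoc, hxy, pow_succ, ← vecMul_vecMul, add_vecMul, add_vecMul, sub_vecMul]
      abel
    rw [hstep, sum_range_succ]
    calc spread ((x (i + m) - x i ᵥ* A ^ m + y (i + m)) ᵥ* A)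
        ≤ (1 - 0) * spread (x (i + m) - x i ᵥ* A ^ m + y (i + m)) :=
          spread_vecMul_le hA hA.1 _
      _ ≤ _ := by linarith [spread_add_le (x (i + m) - x i ᵥ* A ^ m) (y (i + m))]

lemma tendsto_spread_div_of_vecMul_recursion (hA : A ∈ colStochastic ℝ ι)
    (hprim : ∃ n, ∀ i j, 0 < (A ^ n) i j) (hxy : ∀ i, x (i + 1) = (x i + y i) ᵥ* A)
    (hy : Tendsto (fun i => spread (y i) / i) atTop (𝓝 0)) :
    Tendsto (fun i => spread (x i) / i) atTop (𝓝 0) := by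
  obtain ⟨n, ε, hn, hε, hAε⟩ := exists_pos_le_pow_apply hA hprim
  obtain ⟨i₀⟩ := ‹Nonempty ι›
  have hε1 : ε ≤ 1 := (hAε i₀ i₀).trans (le_one_of_mem_colStochastic (pow_mem hA n))
  refine tendsto_div_natCast_of_le_mul_add_sum (c := 1 - ε) hn (by linarith) (by linarith)
    (fun i => spread_nonneg _) (fun i => ?_) hy
  calc spread (x (i + n))
      = spread (x i ᵥ* A ^ n + (x (i + n) - x i ᵥ* A ^ n)) := by rw [add_sub_cancel]
    _ ≤ spread (x i ᵥ* A ^ n) + spread (x (i + n) - x i ᵥ* A ^ n) := spread_add_le _ _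
    _ ≤ (1 - ε) * spread (x i) + ∑ t ∈ range n, spread (y (i + t)) :=
      add_le_add (spread_vecMul_le (pow_mem hA n) hAε _) (spread_sub_vecMul_pow_le hA hxy i n)

theorem tendsto_apply_div_of_vecMul_recursion (hA : A ∈ colStochastic ℝ ι)
    (hprim : ∃ n, ∀ i j, 0 < (A ^ n) i j) {v : ι → ℝ} (hv0 : ∀ i, 0 ≤ v i)
    (hv1 : ∑ i, v i = 1) (hAv : A *ᵥ v = v) (hxy : ∀ i, x (i + 1) = (x i + y i) ᵥ* A)
    {m : ι → ℝ} (hy : ∀ l, Tendsto (fun i => (∑ t ∈ range i, y t l) / i) atTop (𝓝 (m l)))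
    (k : ι) : Tendsto (fun i => x i k / i) atTop (𝓝 (v ⬝ᵥ m)) := by
  have hyi : ∀ l, Tendsto (fun i => |y i l| / i) atTop (𝓝 0) := fun l => by
    simpa [abs_div] using (tendsto_div_natCast_of_tendsto_sum_range_div (hy l)).abs
  have hspread_y : Tendsto (fun i => spread (y i) / i) atTop (𝓝 0) := by
    have h := (tendsto_finsetSum univ fun l _ => hyi l).const_mul 2
    rw [sum_const_zero, mul_zero] at h
    refine squeeze_zero (fun i => div_nonneg (spread_nonneg _) i.cast_nonneg) (fun i => ?_) h
    rw [← sum_div, ← mul_div_assoc]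
    exact div_le_div_of_nonneg_right (spread_le_two_mul_sum_abs _) i.cast_nonneg
  have hspread_x := tendsto_spread_div_of_vecMul_recursion hA hprim hxy hspread_y
  have haverage : Tendsto (fun i => v ⬝ᵥ x i / i) atTop (𝓝 (v ⬝ᵥ m)) := by
    have h := (tendsto_const_div_atTop_nhds_zero_nat (v ⬝ᵥ x 0)).add
      (tendsto_finsetSum univ fun l _ => (hy l).const_mul (v l))
    rw [zero_add] at h
    refine h.congr fun i => ?_
    rw [dotProduct_eq_add_sum_of_vecMul_recursion hAv hxy i, add_div]
    simp only [dotProduct, sum_div, mul_sum, mul_div_assoc]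
    rw [sum_comm]
  have hdeviation : Tendsto (fun i => (x i k - v ⬝ᵥ x i) / i) atTop (𝓝 0) := by
    refine squeeze_zero_norm (fun i => ?_) hspread_x
    rw [norm_div, Real.norm_eq_abs, RCLike.norm_natCast]
    exact div_le_div_of_nonneg_right (abs_sub_dotProduct_le_spread hv0 hv1 _ k) i.cast_nonneg
  simpa [sub_div] using haverage.add hdeviation

end Consensus

section Beliefs

variable {Θ : Type*} [Fintype Θ]

noncomputable def softmax (s : Θ → ℝ) (θ : Θ) : ℝ :=
  Real.exp (s θ) / ∑ θ', Real.exp (s θ')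

lemma sum_exp_pos (s : Θ → ℝ) (θ : Θ) : 0 < ∑ θ', Real.exp (s θ') :=
  sum_pos (fun _ _ => Real.exp_pos _) ⟨θ, mem_univ θ⟩

lemma softmax_pos (s : Θ → ℝ) (θ : Θ) : 0 < softmax s θ :=
  div_pos (Real.exp_pos _) (sum_exp_pos s θ)

lemma sum_softmax [Nonempty Θ] (s : Θ → ℝ) : ∑ θ, softmax s θ = 1 := by
  obtain ⟨θ⟩ := ‹Nonempty Θ›
  simp only [softmax]
  rw [← sum_div, div_self (sum_exp_pos s θ).ne']

lemma log_softmax_div_softmax (s : Θ → ℝ) (θ θ' : Θ) :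
    Real.log (softmax s θ / softmax s θ') = s θ - s θ' := by
  rw [softmax, softmax, div_div_div_cancel_right₀ (sum_exp_pos s θ).ne', ← Real.exp_sub,
    Real.log_exp]

/-- Projecting onto `θTX` the Bayes posterior of a belief that is flat off `θTX` gives the Bayes
update of the two-point belief `(θTX, θ̄TX)` under the fictitious likelihood of `θ̄TX`. -/
lemma posterior_div_one_sub_posterior [DecidableEq Θ] {μ l : Θ → ℝ} (hμ : ∀ θ, 0 < μ θ)
    (hl : ∀ θ, 0 < l θ) {θTX θ1 : Θ} (hθ1 : θ1 ≠ θTX) (hflat : ∀ θ ≠ θTX, μ θ = μ θ1)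
    {c : ℝ} (hc : c ≠ 0) :
    (μ θTX * l θTX / ∑ θ, μ θ * l θ) / ((1 - μ θTX * l θTX / ∑ θ, μ θ * l θ) / c)
      = μ θTX / μ θ1 * (l θTX / ((∑ τ ∈ univ.erase θTX, l τ) / c)) := by
  have hrest : 0 < ∑ τ ∈ univ.erase θTX, l τ :=
    sum_pos (fun τ _ => hl τ) ⟨θ1, mem_erase.2 ⟨hθ1, mem_univ θ1⟩⟩
  have hsplit : ∑ θ, μ θ * l θ = μ θTX * l θTX + μ θ1 * ∑ τ ∈ univ.erase θTX, l τ := by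
    rw [← add_sum_erase _ _ (mem_univ θTX), mul_sum]
    exact congrArg _ (sum_congr rfl fun τ hτ => by rw [hflat τ (ne_of_mem_erase hτ)])
  rw [hsplit]
  generalize ∑ τ ∈ univ.erase θTX, l τ = S at hrest ⊢
  have := hμ θTX
  have := hμ θ1
  have := hl θTX
  field_simp
  ring

lemma tendsto_apply_of_tendsto_div_zero {p : ℕ → Θ → ℝ} (hp : ∀ i θ, 0 < p i θ)
    (hsum : ∀ i, ∑ θ, p i θ = 1) {θ₀ : Θ}
    (h : ∀ θ ≠ θ₀, Tendsto (fun i => p i θ / p i θ₀) atTop (𝓝 0)) :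
    Tendsto (fun i => p i θ₀) atTop (𝓝 1) := by
  classical
  have hterm : ∀ θ, Tendsto (fun i => p i θ / p i θ₀) atTop (𝓝 (if θ = θ₀ then 1 else 0)) := by
    intro θ
    split_ifs with hθ
    · subst hθ
      exact tendsto_const_nhds.congr fun i => (div_self (hp i θ).ne').symm
    · exact h θ hθ
  have hinv := (tendsto_finsetSum univ fun θ _ => hterm θ).inv₀ (by simp)
  rw [sum_ite_eq' univ θ₀, if_pos (mem_univ θ₀), inv_one] at hinv
  refine hinv.congr fun i => ?_
  rw [← sum_div, hsum, one_div, inv_inv]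

end Beliefs

lemma log_belief_ratio_succ {ι Θ Ω : Type*} [Fintype ι] [Fintype Θ] [DecidableEq Θ]
    {X : ι → Type*} {L : ∀ k, Θ → X k → ℝ} (hLpos : ∀ k θ x, 0 < L k θ x) {ξ : ∀ k, ℕ → Ω → X k}
    {a : ι → ι → ℝ} {c : ℝ} (hc : c ≠ 0) {θTX θ1 : Θ} (hθ1 : θ1 ≠ θTX)
    {μb ψ ψh : ι → ℕ → Θ → Ω → ℝ}
    (hψ : ∀ k (i : ℕ) θ ω, ψ k (i + 1) θ ω =
      μb k i θ ω * L k θ (ξ k (i + 1) ω) / ∑ θ', μb k i θ' ω * L k θ' (ξ k (i + 1) ω))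
    (hψh_tx : ∀ k (i : ℕ) ω, ψh k (i + 1) θTX ω = ψ k (i + 1) θTX ω)
    (hψh_ntx : ∀ k (i : ℕ) θ ω, θ ≠ θTX → ψh k (i + 1) θ ω = (1 - ψ k (i + 1) θTX ω) / c)
    (hcomb : ∀ k (i : ℕ) θ ω,
      μb k (i + 1) θ ω = softmax (fun θ => ∑ ℓ, a ℓ k * Real.log (ψh ℓ (i + 1) θ ω)) θ)
    (i : ℕ) (ω : Ω) (k : ι) :
    Real.log (μb k (i + 2) θTX ω / μb k (i + 2) θ1 ω) =
      ∑ ℓ, (Real.log (μb ℓ (i + 1) θTX ω / μb ℓ (i + 1) θ1 ω) + Real.log (L ℓ θTX (ξ ℓ (i + 2) ω)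
        / ((∑ τ ∈ univ.erase θTX, L ℓ τ (ξ ℓ (i + 2) ω)) / c))) * a ℓ k := by
  rw [show i + 2 = i + 1 + 1 from rfl]
  have hpos : ∀ ℓ θ, 0 < μb ℓ (i + 1) θ ω := fun ℓ θ => by
    rw [hcomb]
    exact softmax_pos _ _
  have hflat : ∀ ℓ θ, θ ≠ θTX → μb ℓ (i + 1) θ ω = μb ℓ (i + 1) θ1 ω := fun ℓ θ hθ => by
    simp only [hcomb, softmax, hψh_ntx _ i θ ω hθ, hψh_ntx _ i θ1 ω hθ1]
  rw [hcomb k (i + 1), hcomb k (i + 1), log_softmax_div_softmax, ← sum_sub_distrib]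
  refine sum_congr rfl fun ℓ _ => ?_
  have hstep : ψh ℓ (i + 1 + 1) θTX ω / ψh ℓ (i + 1 + 1) θ1 ω
      = μb ℓ (i + 1) θTX ω / μb ℓ (i + 1) θ1 ω
        * (L ℓ θTX (ξ ℓ (i + 1 + 1) ω)
          / ((∑ τ ∈ univ.erase θTX, L ℓ τ (ξ ℓ (i + 1 + 1) ω)) / c)) := by
    rw [hψh_tx, hψh_ntx _ _ _ _ hθ1, hψ]
    exact posterior_div_one_sub_posterior (hpos ℓ) (fun θ => hLpos ℓ θ _) hθ1 (hflat ℓ) hc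
  have hprior : μb ℓ (i + 1) θTX ω / μb ℓ (i + 1) θ1 ω ≠ 0 :=
    div_ne_zero (hpos ℓ θTX).ne' (hpos ℓ θ1).ne'
  have hsignal : L ℓ θTX (ξ ℓ (i + 1 + 1) ω)
      / ((∑ τ ∈ univ.erase θTX, L ℓ τ (ξ ℓ (i + 1 + 1) ω)) / c) ≠ 0 :=
    div_ne_zero (hLpos ℓ θTX _).ne' (div_ne_zero
      (sum_pos (fun τ _ => hLpos ℓ τ _) ⟨θ1, mem_erase.2 ⟨hθ1, mem_univ θ1⟩⟩).ne' hc)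
  obtain ⟨hTX, h1⟩ := div_ne_zero_iff.1 (hstep ▸ mul_ne_zero hprior hsignal)
  rw [← mul_sub, ← Real.log_div hTX h1, hstep, Real.log_mul hprior hsignal, mul_comm]

section FictitiousLikelihood

variable {α : Type*}

/-- The average of the `a τ` lies between their minimum and maximum. -/
lemma abs_log_div_average_le {Θ : Type*} {s : Finset Θ} (hs : s.Nonempty) {a : Θ → ℝ}
    (ha : ∀ τ ∈ s, 0 < a τ) {b : ℝ} (hb : 0 < b) :
    |Real.log (b / ((∑ τ ∈ s, a τ) / s.card))| ≤ ∑ τ ∈ s, |Real.log (b / a τ)| := by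
  obtain ⟨τmax, hτmax, hmax⟩ := s.exists_max_image a hs
  obtain ⟨τmin, hτmin, hmin⟩ := s.exists_min_image a hs
  have hcard : (0 : ℝ) < s.card := by exact_mod_cast hs.card_pos
  have havg_le : (∑ τ ∈ s, a τ) / s.card ≤ a τmax := by
    rw [div_le_iff₀ hcard, mul_comm]
    simpa using sum_le_card_nsmul s a _ hmax
  have hle_avg : a τmin ≤ (∑ τ ∈ s, a τ) / s.card := by
    rw [le_div_iff₀ hcard, mul_comm]
    simpa using card_nsmul_le_sum s a _ hmin
  have havg_pos := (ha τmin hτmin).trans_le hle_avg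
  have hterm : ∀ τ ∈ s, |Real.log (b / a τ)| ≤ ∑ τ ∈ s, |Real.log (b / a τ)| := fun τ hτ =>
    single_le_sum (f := fun τ => |Real.log (b / a τ)|) (fun _ _ => abs_nonneg _) hτ
  have hlow : Real.log (b / a τmax) ≤ Real.log (b / ((∑ τ ∈ s, a τ) / s.card)) :=
    Real.log_le_log (div_pos hb (ha _ hτmax)) (div_le_div_of_nonneg_left hb.le havg_pos havg_le)
  have hup : Real.log (b / ((∑ τ ∈ s, a τ) / s.card)) ≤ Real.log (b / a τmin) :=
    Real.log_le_log (div_pos hb havg_pos) (div_le_div_of_nonneg_left hb.le (ha _ hτmin) hle_avg)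
  rw [abs_le]
  constructor
  · linarith [neg_abs_le (Real.log (b / a τmax)), hterm τmax hτmax]
  · linarith [le_abs_self (Real.log (b / a τmin)), hterm τmin hτmin]

/-- The paper's `L(·|θ̄TX)`: the likelihood averaged over the hypotheses other than `θTX`. -/
noncomputable def fictitiousLikelihood {H : ℕ} (L : Fin H → α → ℝ) (θTX : Fin H) (x : α) : ℝ :=
  (∑ τ ∈ univ.erase θTX, L τ x) / ((H : ℝ) - 1)

lemma fictitiousLikelihood_eq_average {H : ℕ} (L : Fin H → α → ℝ) (θTX : Fin H) (x : α) :
    fictitiousLikelihood L θTX x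
      = (∑ τ ∈ univ.erase θTX, L τ x) / ((univ.erase θTX).card : ℝ) := by
  rw [card_erase_of_mem (mem_univ _), card_univ, Fintype.card_fin, Nat.cast_sub θTX.pos,
    Nat.cast_one]
  rfl

lemma nonempty_erase_of_two_le {H : ℕ} (hH : 2 ≤ H) (θTX : Fin H) :
    (univ.erase θTX).Nonempty := by
  have := Fin.nontrivial_iff_two_le.2 hH
  obtain ⟨θ1, hθ1⟩ := exists_ne θTX
  exact ⟨θ1, mem_erase.2 ⟨hθ1, mem_univ θ1⟩⟩

lemma fictitiousLikelihood_pos {H : ℕ} (hH : 2 ≤ H) {L : Fin H → α → ℝ}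
    (hLpos : ∀ θ x, 0 < L θ x) (θTX : Fin H) (x : α) : 0 < fictitiousLikelihood L θTX x := by
  have hrest := nonempty_erase_of_two_le hH θTX
  rw [fictitiousLikelihood_eq_average]
  exact div_pos (sum_pos (fun τ _ => hLpos τ x) hrest) (by exact_mod_cast hrest.card_pos)

end FictitiousLikelihood

section Signals

variable {Ω α : Type*} [MeasurableSpace Ω] [MeasurableSpace α] {P : Measure Ω}

lemma integrable_comp_of_map_eq_withDensity {ν : Measure α} {f : Ω → α} (hf : Measurable f)
    {ρ : α → ℝ} (hρ : Measurable ρ) (hρ0 : ∀ x, 0 ≤ ρ x)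
    (hmap : P.map f = ν.withDensity fun x => ENNReal.ofReal (ρ x)) {q : α → ℝ}
    (hq : Measurable q) (hint : Integrable (fun x => ρ x * q x) ν) :
    Integrable (fun ω => q (f ω)) P := by
  refine (integrable_map_measure hq.aestronglyMeasurable hf.aemeasurable).1 ?_
  rw [hmap, integrable_withDensity_iff hρ.ennreal_ofReal
    (ae_of_all _ fun _ => ENNReal.ofReal_lt_top)]
  exact hint.congr (ae_of_all _ fun x => by simp [ENNReal.toReal_ofReal (hρ0 x), mul_comm])

lemma ae_tendsto_sum_range_comp_div {Y : ℕ → Ω → α} (hY : ∀ t, Measurable (Y t))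
    (hindep : Pairwise fun s t => IndepFun (Y s) (Y t) P)
    (hident : ∀ t, P.map (Y t) = P.map (Y 0)) {q : α → ℝ} (hq : Measurable q)
    (hint : Integrable (fun ω => q (Y 0 ω)) P) :
    ∀ᵐ ω ∂P, Tendsto (fun n : ℕ => (∑ t ∈ range n, q (Y t ω)) / n) atTop
      (𝓝 (∫ ω, q (Y 0 ω) ∂P)) :=
  strong_law_ae_real (fun t ω => q (Y t ω)) hint (fun _ _ hst => (hindep hst).comp hq hq)
    fun t => ⟨(hq.comp (hY t)).aemeasurable, (hq.comp (hY 0)).aemeasurable, by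
      change P.map (q ∘ Y t) = P.map (q ∘ Y 0)
      rw [← Measure.map_map hq (hY t), ← Measure.map_map hq (hY 0), hident t]⟩

lemma measurable_fictitiousLikelihood {H : ℕ} {L : Fin H → α → ℝ}
    (hLmeas : ∀ θ, Measurable (L θ)) (θTX : Fin H) : Measurable (fictitiousLikelihood L θTX) :=
  (Finset.measurable_sum _ fun τ _ => hLmeas τ).div_const _

lemma integrable_log_div_comp {ν : Measure α} {H : ℕ} {L : Fin H → α → ℝ}
    (hLpos : ∀ θ x, 0 < L θ x) (hLmeas : ∀ θ, Measurable (L θ)) {θ0 : Fin H}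
    (hKL : ∀ θ, Integrable (fun x => L θ0 x * Real.log (L θ0 x / L θ x)) ν) {f : Ω → α}
    (hf : Measurable f) (hmap : P.map f = ν.withDensity fun x => ENNReal.ofReal (L θ0 x))
    (θ : Fin H) : Integrable (fun ω => Real.log (L θ0 (f ω) / L θ (f ω))) P :=
  integrable_comp_of_map_eq_withDensity hf (hLmeas θ0) (fun x => (hLpos θ0 x).le) hmap
    ((hLmeas θ0).div (hLmeas θ)).log (hKL θ)

lemma integrable_log_div_fictitiousLikelihood_comp {ν : Measure α} {H : ℕ} (hH : 2 ≤ H)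
    {L : Fin H → α → ℝ} (hLpos : ∀ θ x, 0 < L θ x) (hLmeas : ∀ θ, Measurable (L θ))
    {θ0 : Fin H} (hKL : ∀ θ, Integrable (fun x => L θ0 x * Real.log (L θ0 x / L θ x)) ν)
    {f : Ω → α} (hf : Measurable f)
    (hmap : P.map f = ν.withDensity fun x => ENNReal.ofReal (L θ0 x)) (θTX : Fin H) :
    Integrable (fun ω => Real.log (L θ0 (f ω) / fictitiousLikelihood L θTX (f ω))) P := by
  refine (integrable_finsetSum (univ.erase θTX) fun τ _ =>
    (integrable_log_div_comp hLpos hLmeas hKL hf hmap τ).abs).mono'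
    (((hLmeas θ0).div (measurable_fictitiousLikelihood hLmeas θTX)).log.comp
      hf).aestronglyMeasurable (ae_of_all _ fun ω => ?_)
  rw [Real.norm_eq_abs, fictitiousLikelihood_eq_average]
  exact abs_log_div_average_le (nonempty_erase_of_two_le hH θTX) (fun τ _ => hLpos τ _)
    (hLpos θ0 _)

lemma ae_tendsto_sum_log_div_fictitiousLikelihood {ν : Measure α} {H : ℕ} (hH : 2 ≤ H)
    {L : Fin H → α → ℝ} (hLpos : ∀ θ x, 0 < L θ x) (hLmeas : ∀ θ, Measurable (L θ))
    {θ0 θTX : Fin H} (hKL : ∀ θ, Integrable (fun x => L θ0 x * Real.log (L θ0 x / L θ x)) ν)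
    {ξ : ℕ → Ω → α} (hξmeas : ∀ i, Measurable (ξ i))
    (hξdist : ∀ i, 1 ≤ i → P.map (ξ i) = ν.withDensity fun x => ENNReal.ofReal (L θ0 x))
    (hindep : Pairwise fun s t => IndepFun (ξ (s + 1)) (ξ (t + 1)) P) :
    ∀ᵐ ω ∂P, Tendsto (fun n : ℕ => (∑ t ∈ range n,
        Real.log (L θTX (ξ (t + 2) ω) / fictitiousLikelihood L θTX (ξ (t + 2) ω))) / n) atTop
      (𝓝 ((∫ ω, Real.log (L θ0 (ξ 1 ω) / fictitiousLikelihood L θTX (ξ 1 ω)) ∂P)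
        - ∫ ω, Real.log (L θ0 (ξ 1 ω) / L θTX (ξ 1 ω)) ∂P)) := by
  set Lbar := fictitiousLikelihood L θTX
  set q : α → ℝ := fun x => Real.log (L θTX x / Lbar x)
  have hq : Measurable q := ((hLmeas θTX).div (measurable_fictitiousLikelihood hLmeas θTX)).log
  have hq_eq : ∀ x, q x = Real.log (L θ0 x / Lbar x) - Real.log (L θ0 x / L θTX x) := fun x => by
    have hLbar := (fictitiousLikelihood_pos hH hLpos θTX x).ne'
    rw [show q x = Real.log (L θTX x / Lbar x) from rfl, Real.log_div (hLpos θTX x).ne' hLbar,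
      Real.log_div (hLpos θ0 x).ne' hLbar, Real.log_div (hLpos θ0 x).ne' (hLpos θTX x).ne']
    ring
  have hint_bar := integrable_log_div_fictitiousLikelihood_comp hH hLpos hLmeas hKL (hξmeas 1)
    (hξdist 1 le_rfl) θTX
  have hint := integrable_log_div_comp hLpos hLmeas hKL (hξmeas 1) (hξdist 1 le_rfl) θTX
  have hident : IdentDistrib (ξ 2) (ξ 1) P P :=
    ⟨(hξmeas 2).aemeasurable, (hξmeas 1).aemeasurable, by
      rw [hξdist 2 (by norm_num), hξdist 1 le_rfl]⟩
  have hint_q : Integrable (fun ω => q (ξ 1 ω)) P :=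
    (hint_bar.sub hint).congr (ae_of_all _ fun ω => (hq_eq _).symm)
  have hmean : ∫ ω, q (ξ 2 ω) ∂P = (∫ ω, Real.log (L θ0 (ξ 1 ω) / Lbar (ξ 1 ω)) ∂P)
      - ∫ ω, Real.log (L θ0 (ξ 1 ω) / L θTX (ξ 1 ω)) ∂P := by
    refine (hident.comp hq).integral_eq.trans ?_
    rw [← integral_sub hint_bar hint]
    exact integral_congr_ae (ae_of_all _ fun ω => hq_eq _)
  rw [← hmean]
  exact ae_tendsto_sum_range_comp_div (Y := fun t => ξ (t + 2)) (fun t => hξmeas _)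
    (fun s t hst => hindep (by omega : s + 1 ≠ t + 1))
    (fun t => by rw [hξdist _ (by omega), hξdist 2 (by omega)]) hq
    ((hident.comp hq).integrable_iff.2 hint_q)

end Signals

end SocialLearning

open SocialLearning

theorem mislearning_without_self_awareness_of_close_tx_general
    {Ω : Type} [mΩ : MeasurableSpace Ω] (P : Measure Ω)
    (K H : ℕ) (hH : 2 ≤ H)
    (X : Fin K → Type) [∀ k, MeasurableSpace (X k)]
    (ν : ∀ k, Measure (X k))
    (L : ∀ k : Fin K, Fin H → X k → ℝ)
    (θ0 : Fin H)
    (hLpos : ∀ k θ x, 0 < L k θ x)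
    (hLmeas : ∀ k θ, Measurable (L k θ))
    (ξ : ∀ k : Fin K, ℕ → Ω → X k)
    (hξmeas : ∀ k i, Measurable (ξ k i))
    (hξdist : ∀ k (i : ℕ), 1 ≤ i →
      Measure.map (ξ k i) P = (ν k).withDensity (fun x => ENNReal.ofReal (L k θ0 x)))
    (hξindep : iIndepFun
      (fun (i : ℕ) (ω : Ω) (k : Fin K) => ξ k (i + 1) ω) P)
    (hKL : ∀ k θ θ',
      Integrable (fun x => L k θ x * Real.log (L k θ x / L k θ' x)) (ν k))
    (a : Fin K → Fin K → ℝ)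
    (ha_nonneg : ∀ ℓ k, 0 ≤ a ℓ k)
    (ha_stoch : ∀ k, ∑ ℓ, a ℓ k = 1)
    (ha_prim : ∃ n : ℕ, ∀ ℓ k, 0 < ((Matrix.of a) ^ n) ℓ k)
    (v : Fin K → ℝ)
    (hv_pos : ∀ ℓ, 0 < v ℓ)
    (hv_sum : ∑ ℓ, v ℓ = 1)
    (hv_eig : ∀ ℓ, ∑ k, a ℓ k * v k = v ℓ)
    (θTX : Fin H)
    (μb ψ ψh : Fin K → ℕ → Fin H → Ω → ℝ)
    (hψ : ∀ k (i : ℕ) θ ω, ψ k (i + 1) θ ω =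
      μb k i θ ω * L k θ (ξ k (i + 1) ω) /
        ∑ θ', μb k i θ' ω * L k θ' (ξ k (i + 1) ω))
    (hψh_tx : ∀ k (i : ℕ) ω, ψh k (i + 1) θTX ω = ψ k (i + 1) θTX ω)
    (hψh_ntx : ∀ k (i : ℕ) θ ω, θ ≠ θTX →
      ψh k (i + 1) θ ω = (1 - ψ k (i + 1) θTX ω) / ((H : ℝ) - 1))
    (hcomb : ∀ k (i : ℕ) θ ω, μb k (i + 1) θ ω =
      Real.exp (∑ ℓ, a ℓ k * Real.log (ψh ℓ (i + 1) θ ω)) /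
        ∑ θ', Real.exp (∑ ℓ, a ℓ k * Real.log (ψh ℓ (i + 1) θ' ω)))
    (hgap : (∑ m, v m * (∫ ω, Real.log (L m θ0 (ξ m 1 ω) / L m θTX (ξ m 1 ω)) ∂P)) < (∑ m, v m * (∫ ω, Real.log (L m θ0 (ξ m 1 ω) / ((∑ τ ∈ Finset.univ.erase θTX, L m τ (ξ m 1 ω)) / ((H : ℝ) - 1))) ∂P))) :
    ∀ k : Fin K, ∀ᵐ ω ∂P,
      Tendsto (fun (i : ℕ) => μb k i θTX ω) atTop (𝓝 1) := by
  intro k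
  have : Nonempty (Fin K) := ⟨k⟩
  have : Nonempty (Fin H) := ⟨θTX⟩
  have hc : (H : ℝ) - 1 ≠ 0 := sub_ne_zero.2 (by norm_cast; omega)
  have hA : Matrix.of a ∈ colStochastic ℝ (Fin K) :=
    mem_colStochastic_iff_sum.2 ⟨ha_nonneg, ha_stoch⟩
  have hlim := ae_all_iff.2 fun ℓ => ae_tendsto_sum_log_div_fictitiousLikelihood (θTX := θTX)
    hH (hLpos ℓ) (hLmeas ℓ) (hKL ℓ θ0) (hξmeas ℓ) (hξdist ℓ) fun s t hst =>
      (hξindep.indepFun hst).comp (measurable_pi_apply ℓ) (measurable_pi_apply ℓ)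
  filter_upwards [hlim] with ω hω
  have hμ : ∀ i θ, μb k (i + 1) θ ω =
      softmax (fun θ => ∑ ℓ, a ℓ k * Real.log (ψh ℓ (i + 1) θ ω)) θ := fun i θ => hcomb k i θ ω
  refine (tendsto_add_atTop_iff_nat 1).1 <| tendsto_apply_of_tendsto_div_zero
    (p := fun i θ => μb k (i + 1) θ ω) (fun i θ => hμ i θ ▸ softmax_pos _ θ)
    (fun i => by simp only [hμ]; exact sum_softmax _) fun θ hθ => ?_
  have hx := tendsto_apply_div_of_vecMul_recursion hA ha_prim (fun ℓ => (hv_pos ℓ).le) hv_sum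
    (funext hv_eig) (x := fun i ℓ => Real.log (μb ℓ (i + 1) θTX ω / μb ℓ (i + 1) θ ω))
    (fun i => funext <| log_belief_ratio_succ hLpos hc hθ hψ hψh_tx hψh_ntx hcomb i ω) hω k
  have hxtop := Tendsto.num tendsto_natCast_atTop_atTop (by
    simp only [dotProduct, mul_sub, sum_sub_distrib]
    exact sub_pos.2 hgap) hx
  refine (tendsto_inv_atTop_zero.comp (Real.tendsto_exp_atTop.comp hxtop)).congr fun i => ?_
  simp only [Function.comp_apply]
  rw [Real.exp_log (div_pos (hμ i θTX ▸ softmax_pos _ _) (hμ i θ ▸ softmax_pos _ _)), inv_div]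

theorem mislearning_without_self_awareness_of_close_tx
    {Ω : Type} [mΩ : MeasurableSpace Ω] (P : Measure Ω) [IsProbabilityMeasure P]
    (K H : ℕ) (hK : 0 < K) (hH : 2 ≤ H)
    (X : Fin K → Type) [∀ k, MeasurableSpace (X k)]
    (ν : ∀ k, Measure (X k))
    (L : ∀ k : Fin K, Fin H → X k → ℝ)
    (θ0 : Fin H)
    (hLpos : ∀ k θ x, 0 < L k θ x)
    (hLmeas : ∀ k θ, Measurable (L k θ))
    (hLdens : ∀ k θ, ∫ x, L k θ x ∂(ν k) = 1)
    (ξ : ∀ k : Fin K, ℕ → Ω → X k)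
    (hξmeas : ∀ k i, Measurable (ξ k i))
    (hξdist : ∀ k (i : ℕ), 1 ≤ i →
      Measure.map (ξ k i) P = (ν k).withDensity (fun x => ENNReal.ofReal (L k θ0 x)))
    (hξindep : iIndepFun
      (fun (i : ℕ) (ω : Ω) (k : Fin K) => ξ k (i + 1) ω) P)
    (hKL : ∀ k θ θ',
      Integrable (fun x => L k θ x * Real.log (L k θ x / L k θ' x)) (ν k))
    (a : Fin K → Fin K → ℝ)
    (ha_nonneg : ∀ ℓ k, 0 ≤ a ℓ k)
    (ha_stoch : ∀ k, ∑ ℓ, a ℓ k = 1)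
    (ha_prim : ∃ n : ℕ, ∀ ℓ k, 0 < ((Matrix.of a) ^ n) ℓ k)
    (v : Fin K → ℝ)
    (hv_pos : ∀ ℓ, 0 < v ℓ)
    (hv_sum : ∑ ℓ, v ℓ = 1)
    (hv_eig : ∀ ℓ, ∑ k, a ℓ k * v k = v ℓ)
    (θTX : Fin H)
    (μb ψ ψh : Fin K → ℕ → Fin H → Ω → ℝ)
    (μinit : Fin K → Fin H → ℝ)
    (hμinit_pos : ∀ k θ, 0 < μinit k θ)
    (hμinit_sum : ∀ k, ∑ θ, μinit k θ = 1)
    (hμb0 : ∀ k θ ω, μb k 0 θ ω = μinit k θ)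
    (hψ : ∀ k (i : ℕ) θ ω, ψ k (i + 1) θ ω =
      μb k i θ ω * L k θ (ξ k (i + 1) ω) /
        ∑ θ', μb k i θ' ω * L k θ' (ξ k (i + 1) ω))
    (hψh_tx : ∀ k (i : ℕ) ω, ψh k (i + 1) θTX ω = ψ k (i + 1) θTX ω)
    (hψh_ntx : ∀ k (i : ℕ) θ ω, θ ≠ θTX →
      ψh k (i + 1) θ ω = (1 - ψ k (i + 1) θTX ω) / ((H : ℝ) - 1))
    (hcomb : ∀ k (i : ℕ) θ ω, μb k (i + 1) θ ω =
      Real.exp (∑ ℓ, a ℓ k * Real.log (ψh ℓ (i + 1) θ ω)) /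
        ∑ θ', Real.exp (∑ ℓ, a ℓ k * Real.log (ψh ℓ (i + 1) θ' ω)))
    (hgap : (∑ m, v m * (∫ ω, Real.log (L m θ0 (ξ m 1 ω) / L m θTX (ξ m 1 ω)) ∂P)) < (∑ m, v m * (∫ ω, Real.log (L m θ0 (ξ m 1 ω) / ((∑ τ ∈ Finset.univ.erase θTX, L m τ (ξ m 1 ω)) / ((H : ℝ) - 1))) ∂P))) :
    ∀ k : Fin K, ∀ᵐ ω ∂P,
      Tendsto (fun (i : ℕ) => μb k i θTX ω) atTop (𝓝 1) :=
  mislearning_without_self_awareness_of_close_tx_general (mΩ := mΩ) P K H hH X ν L θ0 hLpos hLmeas ξ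
    hξmeas hξdist hξindep hKL a ha_nonneg ha_stoch ha_prim v hv_pos hv_sum hv_eig θTX μb ψ ψh hψ
    hψh_tx hψh_ntx hcomb hgap
end

section
/- Theorem 4, part 1 (Truth learning with self-awareness when θ_TX ≠ θ₀). Suppose the agents run the partial-information algorithm with self-awareness with transmitted hypothesis θ_TX ≠ θ₀, and assume Assumptions 1 and 2. If d_ave(θ_TX) > (1/(H−1)) Σ_{τ ≠ θ_TX} d_ave(τ), then for every agent k, μ_{k,i}(θ_TX) → 0 almost surely. -/
/-
For each agent track `λ`, the log-odds of the hypotheses `θ ≠ θ_TX` against `θ_TX`, averaged over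
those `H - 1` hypotheses. A Bayes step adds the averaged log-likelihood ratio `x` of the new
signal; by concavity of the logarithm, transmitting only `ψ(θ_TX)` and spreading the remaining
mass uniformly can only increase the averaged log-odds, and geometric pooling turns them into a
combination over the neighbours. Hence `λ_{k,i+1} ≥ ∑_ℓ a_{ℓk} (λ_{ℓ,i} + x_{ℓ,i+1})`.
By the strong law of large numbers the `v`-weighted sum of the `x` grows linearly, with slope
`d_ave(θ_TX) - (H-1)⁻¹ ∑_{τ ≠ θ_TX} d_ave(τ) > 0`. The Perron vector makes the `v`-average of `λ`
dominate that sum, and a positive power of `A` pulls the minimum of `λ` over the agents towards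
the `v`-average, so every `λ_{k,i} → ∞`, while `μ_{k,i}(θ_TX) ≤ exp(-λ_{k,i})`.
-/

open MeasureTheory ProbabilityTheory Filter Topology

open Finset

lemma tendsto_atTop_of_tendsto_div_natCast_s4 {f : ℕ → ℝ} {c : ℝ} (hc : 0 < c)
    (h : Tendsto (fun i : ℕ => f i / i) atTop (𝓝 c)) : Tendsto f atTop atTop := by
  refine (h.pos_mul_atTop hc tendsto_natCast_atTop_atTop).congr' ?_
  filter_upwards [eventually_ne_atTop 0] with i hi
  field_simp

lemma tendsto_sub_div_natCast_zero {V : ℕ → ℝ} {c : ℝ}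
    (h : Tendsto (fun i : ℕ => V i / i) atTop (𝓝 c)) (n : ℕ) :
    Tendsto (fun i : ℕ => (V (i + n) - V i) / i) atTop (𝓝 0) := by
  have hshift : Tendsto (fun i : ℕ => V (i + n) / ((i + n : ℕ) : ℝ)) atTop (𝓝 c) :=
    h.comp (tendsto_add_atTop_nat n)
  have hratio : Tendsto (fun i : ℕ => 1 + (n : ℝ) / i) atTop (𝓝 1) := by
    simpa using (tendsto_const_div_atTop_nhds_zero_nat (n : ℝ)).const_add 1
  have := (hshift.mul hratio).sub h
  rw [mul_one, sub_self] at this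
  refine this.congr' ?_
  filter_upwards [eventually_ne_atTop 0] with i hi
  have : ((i + n : ℕ) : ℝ) ≠ 0 := by positivity
  field_simp
  push_cast
  ring

lemma tendsto_div_natCast_zero_of_tendsto_avg {y : ℕ → ℝ} {c : ℝ}
    (h : Tendsto (fun i : ℕ => (∑ r ∈ range i, y r) / i) atTop (𝓝 c)) (j : ℕ) :
    Tendsto (fun i : ℕ => y (i + j) / i) atTop (𝓝 0) := by
  have := (tendsto_sub_div_natCast_zero h (j + 1)).sub (tendsto_sub_div_natCast_zero h j)
  rw [sub_zero] at this
  refine this.congr fun i => ?_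
  rw [← add_assoc, sum_range_succ]
  ring

lemma tendsto_atTop_of_le_mul_add {c : ℝ} (hc0 : 0 ≤ c) (hc1 : c ≤ 1) {u b : ℕ → ℝ}
    (hu : ∀ j, c * u j + b j ≤ u (j + 1)) (hb : Tendsto b atTop atTop) :
    Tendsto u atTop atTop := by
  rw [tendsto_atTop]
  intro C
  obtain ⟨J, hJ⟩ := eventually_atTop.1 (tendsto_atTop.1 hb ((1 - c) * C + 1))
  -- below `C` the sequence gains at least `1` per step, above it it stays
  have hstep : ∀ j ≥ J, min (u j - C) 0 + 1 ≤ u (j + 1) - C := by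
    intro j hj
    rcases le_total (u j - C) 0 with h | h
    · rw [min_eq_left h]; nlinarith [hu j, hJ j hj]
    · rw [min_eq_right h]; nlinarith [hu j, hJ j hj]
  have hgrow : ∀ t : ℕ, min (u J - C + t) 1 ≤ u (J + t) - C := by
    intro t
    induction t with
    | zero => simp
    | succ t ih =>
      have hmin : min (u J - C + t) 0 ≤ min (u (J + t) - C) 0 :=
        le_min ((min_le_min_left _ zero_le_one).trans ih) (min_le_right _ _)
      calc min (u J - C + ↑(t + 1)) 1 = min (u J - C + t) 0 + 1 := by
            rw [← min_add_add_right]; push_cast; ring_nf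
        _ ≤ min (u (J + t) - C) 0 + 1 := by linarith
        _ ≤ u (J + (t + 1)) - C := hstep (J + t) (Nat.le_add_right J t)
  filter_upwards [eventually_ge_atTop (J + ⌈C - u J⌉₊)] with j hj
  obtain ⟨t, rfl⟩ := Nat.exists_eq_add_of_le (le_trans (Nat.le_add_right _ _) hj)
  have ht : C - u J ≤ t := (Nat.le_ceil _).trans (by exact_mod_cast Nat.le_of_add_le_add_left hj)
  have := hgrow t
  have : 0 ≤ min (u J - C + t) 1 := le_min (by linarith) zero_le_one
  linarith

lemma tendsto_atTop_of_tendsto_comp_add_mul {u : ℕ → ℝ} {n : ℕ} (hn : 0 < n)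
    (h : ∀ s < n, Tendsto (fun j => u (s + j * n)) atTop atTop) : Tendsto u atTop atTop := by
  rw [tendsto_atTop]
  intro C
  have : ∀ᶠ j in atTop, ∀ s ∈ range n, C ≤ u (s + j * n) :=
    (eventually_all_finset _).2 fun s hs => tendsto_atTop.1 (h s (mem_range.1 hs)) C
  obtain ⟨J, hJ⟩ := eventually_atTop.1 this
  filter_upwards [eventually_ge_atTop (J * n)] with i hi
  have := hJ (i / n) ((Nat.le_div_iff_mul_le hn).2 hi) (i % n) (mem_range.2 (Nat.mod_lt i hn))
  rwa [Nat.mod_add_div'] at this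

lemma tendsto_atTop_of_le_mul_add_of_period {c : ℝ} (hc0 : 0 ≤ c) (hc1 : c ≤ 1) {n : ℕ}
    (hn : 0 < n) {u b : ℕ → ℝ} (hu : ∀ i, c * u i + b i ≤ u (i + n))
    (hb : Tendsto b atTop atTop) : Tendsto u atTop atTop := by
  refine tendsto_atTop_of_tendsto_comp_add_mul hn fun s _ => ?_
  have hprog : Tendsto (fun j => s + j * n) atTop atTop :=
    tendsto_atTop_mono (fun j => le_add_left (Nat.le_mul_of_pos_right j hn)) tendsto_id
  exact tendsto_atTop_of_le_mul_add hc0 hc1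
    (fun j => by simpa [add_mul, add_assoc] using hu (s + j * n)) (hb.comp hprog)

lemma inf'_mul_add_sum_le {ι : Type*} [Fintype ι] [Nonempty ι] {p v y : ι → ℝ} {δ : ℝ}
    (hp : ∀ ℓ, δ * v ℓ ≤ p ℓ) (hp1 : ∑ ℓ, p ℓ = 1) (hv1 : ∑ ℓ, v ℓ = 1) :
    (1 - δ) * univ.inf' univ_nonempty y + δ * ∑ ℓ, v ℓ * y ℓ ≤ ∑ ℓ, p ℓ * y ℓ := by
  have hsum : ∑ ℓ, (p ℓ - δ * v ℓ) = 1 - δ := by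
    rw [sum_sub_distrib, hp1, ← mul_sum, hv1, mul_one]
  calc (1 - δ) * univ.inf' univ_nonempty y + δ * ∑ ℓ, v ℓ * y ℓ
      = ∑ ℓ, ((p ℓ - δ * v ℓ) * univ.inf' univ_nonempty y + δ * (v ℓ * y ℓ)) := by
        rw [sum_add_distrib, ← sum_mul, hsum, mul_sum]
    _ ≤ ∑ ℓ, ((p ℓ - δ * v ℓ) * y ℓ + δ * (v ℓ * y ℓ)) := by
        gcongr with ℓ
        · linarith [hp ℓ]
        · exact inf'_le _ (mem_univ ℓ)
    _ = ∑ ℓ, p ℓ * y ℓ := by congr! 1 with ℓ; ring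

namespace Matrix

variable {ι : Type*} [Fintype ι] [DecidableEq ι] {A : Matrix ι ι ℝ}

lemma exists_pos_pow_pos_of_mem_colStochastic (hA : A ∈ colStochastic ℝ ι)
    (hprim : ∃ n, ∀ ℓ k, 0 < (A ^ n) ℓ k) : ∃ n, 0 < n ∧ ∀ ℓ k, 0 < (A ^ n) ℓ k := by
  obtain ⟨n, hn⟩ := hprim
  refine ⟨n + 1, n.succ_pos, fun ℓ k => ?_⟩
  obtain ⟨j, hj⟩ : ∃ j, 0 < A j k := by
    by_contra! h
    have := sum_col_of_mem_colStochastic hA k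
    rw [sum_eq_zero fun j _ => le_antisymm (h j) (nonneg_of_mem_colStochastic hA)] at this
    exact zero_ne_one this
  rw [pow_succ, mul_apply]
  exact sum_pos' (fun i _ => mul_nonneg (hn ℓ i).le (nonneg_of_mem_colStochastic hA))
    ⟨j, mem_univ j, mul_pos (hn ℓ j) hj⟩

end Matrix

lemma exists_pos_mul_le {ι κ : Type*} [Finite ι] [Finite κ] {v : ι → ℝ} {B : ι → κ → ℝ}
    (hB : ∀ ℓ k, 0 < B ℓ k) : ∃ δ > 0, ∀ ℓ k, δ * v ℓ ≤ B ℓ k := by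
  have : ∀ᶠ δ in 𝓝[>] (0 : ℝ), ∀ ℓ k, δ * v ℓ ≤ B ℓ k := by
    simp only [eventually_all]
    intro ℓ k
    have : Tendsto (fun δ : ℝ => δ * v ℓ) (𝓝[>] 0) (𝓝 0) :=
      ((continuous_mul_const (v ℓ)).tendsto' 0 0 (zero_mul _)).mono_left nhdsWithin_le_nhds
    exact this.eventually (eventually_le_nhds (hB ℓ k))
  exact (this.and self_mem_nhdsWithin).exists.imp fun δ h => ⟨h.2, h.1⟩

section Consensus

variable {ι : Type*} [Fintype ι] {A : Matrix ι ι ℝ} {lam x : ℕ → ι → ℝ}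

lemma sum_mul_add_sum_le_of_recursion {v : ι → ℝ} (hv : ∀ ℓ, 0 ≤ v ℓ)
    (hAv : ∀ ℓ, ∑ k, A ℓ k * v k = v ℓ)
    (hrec : ∀ i k, ∑ ℓ, A ℓ k * (lam i ℓ + x (i + 1) ℓ) ≤ lam (i + 1) k) (i : ℕ) :
    ∑ ℓ, v ℓ * lam 0 ℓ + ∑ r ∈ range i, ∑ ℓ, v ℓ * x (r + 1) ℓ ≤ ∑ ℓ, v ℓ * lam i ℓ := by
  induction i with
  | zero => simp
  | succ i ih =>
    have hstep : ∑ ℓ, v ℓ * (lam i ℓ + x (i + 1) ℓ) ≤ ∑ k, v k * lam (i + 1) k :=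
      calc ∑ ℓ, v ℓ * (lam i ℓ + x (i + 1) ℓ)
          = ∑ ℓ, (∑ k, A ℓ k * v k) * (lam i ℓ + x (i + 1) ℓ) := by simp only [hAv]
        _ = ∑ k, v k * ∑ ℓ, A ℓ k * (lam i ℓ + x (i + 1) ℓ) := by
            simp only [sum_mul, mul_sum]
            rw [sum_comm]
            congr! 2 with k ℓ; ring
        _ ≤ ∑ k, v k * lam (i + 1) k := by gcongr with k; exacts [hv k, hrec i k]
    rw [sum_range_succ]
    simp only [mul_add, sum_add_distrib] at hstep
    linarith

lemma tendsto_sum_sum_abs_div_natCast_zero {xbar : ι → ℝ}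
    (havg : ∀ ℓ, Tendsto (fun i : ℕ => (∑ r ∈ range i, x (r + 1) ℓ) / i) atTop (𝓝 (xbar ℓ)))
    (n : ℕ) :
    Tendsto (fun i : ℕ => (∑ r ∈ range n, ∑ ℓ, |x (i + r + 1) ℓ|) / i) atTop (𝓝 0) := by
  simp_rw [sum_div]
  rw [← sum_const_zero (s := range n)]
  refine tendsto_finsetSum _ fun r _ => ?_
  rw [← sum_const_zero (s := (univ : Finset ι))]
  refine tendsto_finsetSum _ fun ℓ _ => ?_
  have := (tendsto_div_natCast_zero_of_tendsto_avg (havg ℓ) r).abs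
  rw [abs_zero] at this
  refine this.congr' ?_
  filter_upwards with i
  rw [abs_div, Nat.abs_cast, add_right_comm]

variable [DecidableEq ι]

lemma sum_mul_le_add_of_recursion (hA : A ∈ Matrix.colStochastic ℝ ι)
    (hrec : ∀ i k, ∑ ℓ, A ℓ k * (lam i ℓ + x (i + 1) ℓ) ≤ lam (i + 1) k) (i : ℕ) (k : ι) :
    ∑ ℓ, A ℓ k * lam i ℓ ≤ lam (i + 1) k + ∑ ℓ, |x (i + 1) ℓ| := by
  have hnoise : -∑ ℓ, |x (i + 1) ℓ| ≤ ∑ ℓ, A ℓ k * x (i + 1) ℓ := by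
    rw [← sum_neg_distrib]
    gcongr with ℓ
    have h0 : 0 ≤ A ℓ k := Matrix.nonneg_of_mem_colStochastic hA
    have h1 : A ℓ k ≤ 1 := Matrix.le_one_of_mem_colStochastic hA
    nlinarith [neg_abs_le (x (i + 1) ℓ), abs_nonneg (x (i + 1) ℓ)]
  have := hrec i k
  simp only [mul_add, sum_add_distrib] at this
  linarith

lemma sum_pow_mul_sub_le_of_recursion (hA : A ∈ Matrix.colStochastic ℝ ι)
    (hrec : ∀ i k, ∑ ℓ, A ℓ k * (lam i ℓ + x (i + 1) ℓ) ≤ lam (i + 1) k) (m : ℕ) :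
    ∀ i k, ∑ ℓ, (A ^ m) ℓ k * lam i ℓ - ∑ r ∈ range m, ∑ ℓ, |x (i + r + 1) ℓ|
      ≤ lam (i + m) k := by
  induction m with
  | zero => simp [Matrix.one_apply]
  | succ m ih =>
    intro i k
    have hAm := pow_mem hA m
    have hpush : ∑ ℓ, (A ^ (m + 1)) ℓ k * lam i ℓ
        ≤ ∑ j, (A ^ m) j k * lam (i + 1) j + ∑ ℓ, |x (i + 1) ℓ| :=
      calc ∑ ℓ, (A ^ (m + 1)) ℓ k * lam i ℓ = ∑ j, (A ^ m) j k * ∑ ℓ, A ℓ j * lam i ℓ := by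
            simp_rw [pow_succ', Matrix.mul_apply, sum_mul, mul_sum]
            rw [sum_comm]
            congr! 2 with j ℓ; ring
        _ ≤ ∑ j, (A ^ m) j k * (lam (i + 1) j + ∑ ℓ, |x (i + 1) ℓ|) := by
            gcongr with j
            exacts [Matrix.nonneg_of_mem_colStochastic hAm, sum_mul_le_add_of_recursion hA hrec i j]
        _ = _ := by
            simp_rw [mul_add, sum_add_distrib, ← sum_mul,
              Matrix.sum_col_of_mem_colStochastic hAm, one_mul]
    have := ih (i + 1) k
    rw [sum_range_succ']
    simp only [add_assoc, add_comm 1, add_zero] at this ⊢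
    linarith

theorem tendsto_atTop_of_consensus_recursion (hA : A ∈ Matrix.colStochastic ℝ ι)
    (hprim : ∃ n, ∀ ℓ k, 0 < (A ^ n) ℓ k) {v : ι → ℝ} (hv_pos : ∀ ℓ, 0 < v ℓ)
    (hv_sum : ∑ ℓ, v ℓ = 1) (hAv : ∀ ℓ, ∑ k, A ℓ k * v k = v ℓ)
    (hrec : ∀ i k, ∑ ℓ, A ℓ k * (lam i ℓ + x (i + 1) ℓ) ≤ lam (i + 1) k) {xbar : ι → ℝ}
    (havg : ∀ ℓ, Tendsto (fun i : ℕ => (∑ r ∈ range i, x (r + 1) ℓ) / i) atTop (𝓝 (xbar ℓ)))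
    (hdrift : 0 < ∑ ℓ, v ℓ * xbar ℓ) (k : ι) : Tendsto (fun i => lam i k) atTop atTop := by
  have : Nonempty ι := ⟨k⟩
  obtain ⟨n, hn, hApos⟩ := Matrix.exists_pos_pow_pos_of_mem_colStochastic hA hprim
  obtain ⟨δ, hδ, hδv⟩ := exists_pos_mul_le (v := v) hApos
  have hAn := pow_mem hA n
  have hδ1 : δ ≤ 1 := by
    have := sum_le_sum fun ℓ (_ : ℓ ∈ univ) => hδv ℓ k
    rwa [← mul_sum, hv_sum, mul_one, Matrix.sum_col_of_mem_colStochastic hAn] at this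
  set noise := fun i => ∑ r ∈ range n, ∑ ℓ, |x (i + r + 1) ℓ|
  -- the minimum over agents contracts towards the `v`-average, which grows linearly
  have hmin : ∀ i, (1 - δ) * univ.inf' univ_nonempty (lam i)
      + (δ * ∑ ℓ, v ℓ * lam i ℓ - noise i) ≤ univ.inf' univ_nonempty (lam (i + n)) := by
    intro i
    refine le_inf' _ _ fun k _ => ?_
    have := inf'_mul_add_sum_le (y := lam i) (fun ℓ => hδv ℓ k)
      (Matrix.sum_col_of_mem_colStochastic hAn k) hv_sum
    linarith [sum_pow_mul_sub_le_of_recursion hA hrec n i k]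
  have hforcing : Tendsto (fun i => δ * ∑ ℓ, v ℓ * lam i ℓ - noise i) atTop atTop := by
    set T := fun i => ∑ r ∈ range i, ∑ ℓ, v ℓ * x (r + 1) ℓ
    have hT : Tendsto (fun i : ℕ => T i / i) atTop (𝓝 (∑ ℓ, v ℓ * xbar ℓ)) := by
      simp_rw [T, sum_comm (s := range _), ← mul_sum, sum_div, mul_div_assoc]
      exact tendsto_finsetSum _ fun ℓ _ => (havg ℓ).const_mul (v ℓ)
    have hlin : Tendsto (fun i : ℕ => (δ * (∑ ℓ, v ℓ * lam 0 ℓ + T i) - noise i) / i) atTop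
        (𝓝 (δ * ∑ ℓ, v ℓ * xbar ℓ)) := by
      have := ((tendsto_const_div_atTop_nhds_zero_nat (∑ ℓ, v ℓ * lam 0 ℓ)).add hT).const_mul δ
        |>.sub (tendsto_sum_sum_abs_div_natCast_zero havg n)
      rw [zero_add, sub_zero] at this
      refine this.congr fun i => ?_
      ring
    refine tendsto_atTop_mono (fun i => ?_) (tendsto_atTop_of_tendsto_div_natCast_s4
      (mul_pos hδ hdrift) hlin)
    have := sum_mul_add_sum_le_of_recursion (fun ℓ => (hv_pos ℓ).le) hAv hrec i
    gcongr
  exact tendsto_atTop_mono (fun i => inf'_le _ (mem_univ k))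
    (tendsto_atTop_of_le_mul_add_of_period (by linarith) (by linarith) hn hmin hforcing)

end Consensus

section MeanExcess

variable {α : Type*} [Fintype α]

lemma cast_card_sub_one_pos [Nontrivial α] : (0 : ℝ) < (Fintype.card α : ℝ) - 1 := by
  rw [sub_pos, Nat.one_lt_cast]; exact Fintype.one_lt_card

lemma exp_div_sum_exp_mem_Ioc (G : α → ℝ) (θ : α) :
    Real.exp (G θ) / ∑ θ', Real.exp (G θ') ∈ Set.Ioc 0 1 := by
  have hZ : 0 < ∑ θ', Real.exp (G θ') := sum_pos (fun θ _ => Real.exp_pos _) ⟨θ, mem_univ θ⟩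
  exact ⟨div_pos (Real.exp_pos _) hZ, div_le_one_of_le₀
    (single_le_sum (fun θ' _ => (Real.exp_pos (G θ')).le) (mem_univ θ)) hZ.le⟩

variable [DecidableEq α]

lemma cast_card_erase_univ (t : α) :
    ((univ.erase t).card : ℝ) = (Fintype.card α : ℝ) - 1 := by
  rw [card_erase_of_mem (mem_univ t), card_univ, Nat.cast_sub (Fintype.card_pos_iff.2 ⟨t⟩),
    Nat.cast_one]

noncomputable def meanExcess (t : α) : (α → ℝ) →ₗ[ℝ] ℝ where
  toFun g := ((Fintype.card α : ℝ) - 1)⁻¹ * ∑ θ ∈ univ.erase t, (g θ - g t)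
  map_add' f g := by
    simp only [Pi.add_apply, ← mul_add, ← sum_add_distrib]
    congr! 2; ring
  map_smul' c g := by
    simp only [Pi.smul_apply, smul_eq_mul, RingHom.id_apply, mul_sum]
    congr! 1 with θ; ring

lemma meanExcess_apply (t : α) (g : α → ℝ) :
    meanExcess t g = ((Fintype.card α : ℝ) - 1)⁻¹ * ∑ θ ∈ univ.erase t, (g θ - g t) := rfl

lemma meanExcess_sub_const (t : α) (g : α → ℝ) (c : ℝ) :
    meanExcess t (fun θ => g θ - c) = meanExcess t g := by
  simp only [meanExcess_apply, sub_sub_sub_cancel_right]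

lemma meanExcess_eq_sub [Nontrivial α] (t : α) (g : α → ℝ) :
    meanExcess t g = ((Fintype.card α : ℝ) - 1)⁻¹ * ∑ θ ∈ univ.erase t, g θ - g t := by
  have := (cast_card_sub_one_pos (α := α)).ne'
  rw [meanExcess_apply, sum_sub_distrib, sum_const, nsmul_eq_mul, cast_card_erase_univ]
  field_simp

lemma meanExcess_log_bayes {t : α} {μ L : α → ℝ} (hμ : ∀ θ, 0 < μ θ) (hL : ∀ θ, 0 < L θ) :
    meanExcess t (fun θ => Real.log (μ θ * L θ / ∑ θ', μ θ' * L θ'))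
      = meanExcess t (fun θ => Real.log (μ θ)) + meanExcess t (fun θ => Real.log (L θ)) := by
  have hZ : 0 < ∑ θ', μ θ' * L θ' := sum_pos (fun θ _ => mul_pos (hμ θ) (hL θ)) ⟨t, mem_univ t⟩
  have : (fun θ => Real.log (μ θ * L θ / ∑ θ', μ θ' * L θ'))
      = fun θ => (Real.log (μ θ) + Real.log (L θ)) - Real.log (∑ θ', μ θ' * L θ') := by
    funext θ
    rw [Real.log_div (mul_pos (hμ θ) (hL θ)).ne' hZ.ne', Real.log_mul (hμ θ).ne' (hL θ).ne']
  rw [this, meanExcess_sub_const, ← map_add]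
  rfl

lemma meanExcess_log_softmax (t : α) (G : α → ℝ) :
    meanExcess t (fun θ => Real.log (Real.exp (G θ) / ∑ θ', Real.exp (G θ'))) = meanExcess t G := by
  have hZ : 0 < ∑ θ', Real.exp (G θ') := sum_pos (fun θ _ => Real.exp_pos _) ⟨t, mem_univ t⟩
  simp_rw [Real.log_div (Real.exp_pos _).ne' hZ.ne', Real.log_exp]
  exact meanExcess_sub_const t G _

lemma meanExcess_log_le_of_average [Nontrivial α] {t : α} {ψ ψh : α → ℝ} (hψ : ∀ θ, 0 < ψ θ)
    (hψ_sum : ∑ θ, ψ θ = 1) (hψh_t : ψh t = ψ t)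
    (hψh_ne : ∀ θ, θ ≠ t → ψh θ = (1 - ψ t) / ((Fintype.card α : ℝ) - 1)) :
    meanExcess t (fun θ => Real.log (ψ θ)) ≤ meanExcess t (fun θ => Real.log (ψh θ)) := by
  have hpos : (0 : ℝ) < (Fintype.card α : ℝ) - 1 := cast_card_sub_one_pos
  have hrest : 1 - ψ t = ∑ θ ∈ univ.erase t, ψ θ := by
    rw [← hψ_sum, ← add_sum_erase _ _ (mem_univ t)]; ring
  have hjensen := strictConcaveOn_log_Ioi.concaveOn.le_map_sum
    (t := univ.erase t) (w := fun _ => ((Fintype.card α : ℝ) - 1)⁻¹) (p := ψ)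
    (fun _ _ => (inv_pos.2 hpos).le)
    (by rw [sum_const, nsmul_eq_mul, cast_card_erase_univ, mul_inv_cancel₀ hpos.ne'])
    (fun θ _ => hψ θ)
  simp only [smul_eq_mul] at hjensen
  rw [← mul_sum, ← mul_sum, ← hrest] at hjensen
  have hψh_erase : ∑ θ ∈ univ.erase t, Real.log (ψh θ)
      = ∑ θ ∈ univ.erase t, Real.log ((1 - ψ t) / ((Fintype.card α : ℝ) - 1)) :=
    sum_congr rfl fun θ hθ => by rw [hψh_ne θ (ne_of_mem_erase hθ)]
  rw [meanExcess_eq_sub, meanExcess_eq_sub, hψh_t, hψh_erase, sum_const, nsmul_eq_mul,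
    cast_card_erase_univ, ← mul_assoc, inv_mul_cancel₀ hpos.ne', one_mul, div_eq_inv_mul]
  linarith

lemma apply_le_exp_neg_meanExcess_log [Nontrivial α] {μ : α → ℝ} (hμ : ∀ θ, 0 < μ θ)
    (hμ_le : ∀ θ, μ θ ≤ 1) (t : α) :
    μ t ≤ Real.exp (-meanExcess t (fun θ => Real.log (μ θ))) := by
  have : ∑ θ ∈ univ.erase t, Real.log (μ θ) ≤ 0 :=
    sum_nonpos fun θ _ => Real.log_nonpos (hμ θ).le (hμ_le θ)
  rw [← Real.log_le_iff_le_exp (hμ t), meanExcess_eq_sub]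
  nlinarith [inv_pos.2 (cast_card_sub_one_pos (α := α))]

section SelfAwareUpdate

variable [Nontrivial α] {ι : Type*} [Fintype ι] [DecidableEq ι]

lemma sum_mul_meanExcess_log_le_of_selfAware_update (t : α) {a : ι → ℝ} (ha : ∀ ℓ, 0 ≤ a ℓ)
    {μ L ψ ψh : ι → α → ℝ} {μ' : α → ℝ} (hμ : ∀ ℓ θ, 0 < μ ℓ θ) (hL : ∀ ℓ θ, 0 < L ℓ θ)
    (hψ : ∀ ℓ θ, ψ ℓ θ = μ ℓ θ * L ℓ θ / ∑ θ', μ ℓ θ' * L ℓ θ')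
    (hψh_t : ∀ ℓ, ψh ℓ t = ψ ℓ t)
    (hψh_ne : ∀ ℓ θ, θ ≠ t → ψh ℓ θ = (1 - ψ ℓ t) / ((Fintype.card α : ℝ) - 1)) (k : ι)
    (hμ' : ∀ θ, μ' θ = Real.exp (a k * Real.log (ψ k θ)
        + ∑ ℓ ∈ univ.erase k, a ℓ * Real.log (ψh ℓ θ)) /
      ∑ θ', Real.exp (a k * Real.log (ψ k θ') + ∑ ℓ ∈ univ.erase k, a ℓ * Real.log (ψh ℓ θ'))) :
    ∑ ℓ, a ℓ * (meanExcess t (fun θ => Real.log (μ ℓ θ))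
      + meanExcess t (fun θ => Real.log (L ℓ θ))) ≤ meanExcess t (fun θ => Real.log (μ' θ)) := by
  have hZ : ∀ ℓ, 0 < ∑ θ', μ ℓ θ' * L ℓ θ' := fun ℓ =>
    sum_pos (fun θ _ => mul_pos (hμ ℓ θ) (hL ℓ θ)) ⟨t, mem_univ t⟩
  have hψ_pos : ∀ ℓ θ, 0 < ψ ℓ θ := fun ℓ θ => by
    rw [hψ]; exact div_pos (mul_pos (hμ ℓ θ) (hL ℓ θ)) (hZ ℓ)
  have hψ_sum : ∀ ℓ, ∑ θ, ψ ℓ θ = 1 := fun ℓ => by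
    simp_rw [hψ, ← sum_div, div_self (hZ ℓ).ne']
  have hbayes : ∀ ℓ, meanExcess t (fun θ => Real.log (ψ ℓ θ))
      = meanExcess t (fun θ => Real.log (μ ℓ θ)) + meanExcess t (fun θ => Real.log (L ℓ θ)) :=
    fun ℓ => by simp_rw [hψ]; exact meanExcess_log_bayes (hμ ℓ) (hL ℓ)
  have hcombine : meanExcess t (fun θ => a k * Real.log (ψ k θ)
        + ∑ ℓ ∈ univ.erase k, a ℓ * Real.log (ψh ℓ θ))
      = a k * meanExcess t (fun θ => Real.log (ψ k θ))
        + ∑ ℓ ∈ univ.erase k, a ℓ * meanExcess t (fun θ => Real.log (ψh ℓ θ)) := by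
    simp only [← smul_eq_mul, ← map_smul, ← map_sum, ← map_add]
    congr 1
    funext θ
    simp [Finset.sum_apply]
  calc ∑ ℓ, a ℓ * (meanExcess t (fun θ => Real.log (μ ℓ θ))
        + meanExcess t (fun θ => Real.log (L ℓ θ)))
      = a k * meanExcess t (fun θ => Real.log (ψ k θ))
        + ∑ ℓ ∈ univ.erase k, a ℓ * meanExcess t (fun θ => Real.log (ψ ℓ θ)) := by
        simp_rw [hbayes]; exact (add_sum_erase _ _ (mem_univ k)).symm
    _ ≤ a k * meanExcess t (fun θ => Real.log (ψ k θ))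
        + ∑ ℓ ∈ univ.erase k, a ℓ * meanExcess t (fun θ => Real.log (ψh ℓ θ)) := by
        gcongr with ℓ
        exacts [ha ℓ, meanExcess_log_le_of_average (hψ_pos ℓ) (hψ_sum ℓ) (hψh_t ℓ) (hψh_ne ℓ)]
    _ = meanExcess t (fun θ => Real.log (μ' θ)) := by
        simp_rw [hμ', meanExcess_log_softmax, hcombine]

end SelfAwareUpdate

lemma integrable_comp_of_map_eq_withDensity_s4 {Ω X : Type*} [MeasurableSpace Ω] [MeasurableSpace X]
    {P : Measure Ω} {ν : Measure X} {ζ : Ω → X} (hζ : Measurable ζ) {p : X → ℝ}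
    (hp : Measurable p) (hp0 : ∀ x, 0 ≤ p x)
    (hmap : P.map ζ = ν.withDensity (fun x => ENNReal.ofReal (p x))) {f : X → ℝ}
    (hf : Measurable f) (hint : Integrable (fun x => p x * f x) ν) :
    Integrable (fun ω => f (ζ ω)) P := by
  have : Integrable f (P.map ζ) := by
    rw [hmap, integrable_withDensity_iff hp.ennreal_ofReal
      (Eventually.of_forall fun _ => ENNReal.ofReal_lt_top)]
    simpa only [ENNReal.toReal_ofReal (hp0 _), mul_comm] using hint
  exact (integrable_map_measure hf.aestronglyMeasurable hζ.aemeasurable).1 this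

lemma integrable_meanExcess {Ω : Type*} [MeasurableSpace Ω] {P : Measure Ω} (t : α)
    {f : α → Ω → ℝ} (hf : ∀ θ, Integrable (f θ) P) :
    Integrable (fun ω => meanExcess t (fun θ => f θ ω)) P := by
  simp only [meanExcess_apply]
  exact (integrable_finsetSum _ fun θ _ => (hf θ).sub (hf t)).const_mul _

lemma integral_meanExcess {Ω : Type*} [MeasurableSpace Ω] {P : Measure Ω} (t : α)
    {f : α → Ω → ℝ} (hf : ∀ θ, Integrable (f θ) P) :
    ∫ ω, meanExcess t (fun θ => f θ ω) ∂P = meanExcess t (fun θ => ∫ ω, f θ ω ∂P) := by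
  simp only [meanExcess_apply]
  rw [integral_const_mul, integral_finsetSum (f := fun θ ω => f θ ω - f t ω) _
    fun θ _ => (hf θ).sub (hf t)]
  simp_rw [integral_sub (hf _) (hf t)]

lemma sum_mul_meanExcess_neg [Nontrivial α] {ι : Type*} [Fintype ι] (t : α) (v : ι → ℝ)
    (D : ι → α → ℝ) :
    ∑ ℓ, v ℓ * meanExcess t (fun θ => -D ℓ θ)
      = ∑ ℓ, v ℓ * D ℓ t - ((Fintype.card α : ℝ) - 1)⁻¹ * ∑ θ ∈ univ.erase t, ∑ ℓ, v ℓ * D ℓ θ := by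
  have : ∑ ℓ, v ℓ * meanExcess t (fun θ => -D ℓ θ)
      = meanExcess t (fun θ => -∑ ℓ, v ℓ * D ℓ θ) := by
    simp only [← smul_eq_mul, ← map_smul, ← map_sum]
    congr 1
    funext θ
    simp [Finset.sum_apply]
  rw [this, meanExcess_eq_sub, sum_neg_distrib, mul_neg]
  ring

lemma ae_tendsto_avg_meanExcess_log_likelihood {Ω X : Type*} [MeasurableSpace Ω]
    [MeasurableSpace X] {P : Measure Ω} {ν : Measure X} {L : α → X → ℝ} (θ0 t : α)
    (hLpos : ∀ θ x, 0 < L θ x) (hLmeas : ∀ θ, Measurable (L θ))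
    (hKL : ∀ θ, Integrable (fun x => L θ0 x * Real.log (L θ0 x / L θ x)) ν)
    {ζ : ℕ → Ω → X} (hζmeas : ∀ r, Measurable (ζ r))
    (hζdist : ∀ r, P.map (ζ r) = ν.withDensity (fun x => ENNReal.ofReal (L θ0 x)))
    (hζindep : iIndepFun ζ P) :
    ∀ᵐ ω ∂P, Tendsto (fun n : ℕ =>
        (∑ r ∈ range n, meanExcess t (fun θ => Real.log (L θ (ζ r ω)))) / n) atTop
      (𝓝 (meanExcess t (fun θ => -∫ ω, Real.log (L θ0 (ζ 0 ω) / L θ (ζ 0 ω)) ∂P))) := by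
  set g : X → ℝ := fun x => meanExcess t (fun θ => Real.log (L θ x))
  have hg : Measurable g := by
    simp only [g, meanExcess_apply]
    fun_prop
  -- the log-likelihoods themselves need not be integrable, only their ratios to the truth
  have hg_llr : ∀ x, g x = meanExcess t (fun θ => -Real.log (L θ0 x / L θ x)) := fun x => by
    simp_rw [Real.log_div (hLpos θ0 x).ne' (hLpos _ x).ne', neg_sub]
    exact (meanExcess_sub_const t _ _).symm
  have hllr : ∀ θ, Integrable (fun ω => -Real.log (L θ0 (ζ 0 ω) / L θ (ζ 0 ω))) P := fun θ =>
    (integrable_comp_of_map_eq_withDensity_s4 (hζmeas 0) (hLmeas θ0) (fun x => (hLpos θ0 x).le)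
      (hζdist 0) (((hLmeas θ0).div (hLmeas θ)).log) (hKL θ)).neg
  have hint : Integrable (fun ω => g (ζ 0 ω)) P := by
    simp_rw [hg_llr]; exact integrable_meanExcess t hllr
  have hident : ∀ r, IdentDistrib (fun ω => g (ζ r ω)) (fun ω => g (ζ 0 ω)) P P := fun r =>
    have : IdentDistrib (ζ r) (ζ 0) P P :=
      ⟨(hζmeas r).aemeasurable, (hζmeas 0).aemeasurable, by rw [hζdist, hζdist]⟩
    this.comp hg
  have hslln := strong_law_ae_real (fun r ω => g (ζ r ω)) hint
    (fun i j hij => (hζindep.comp (fun _ => g) fun _ => hg).indepFun hij) hident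
  simp_rw [hg_llr, integral_meanExcess t hllr, integral_neg] at hslln
  simpa only [← hg_llr] using hslln

end MeanExcess

theorem truth_learning_with_self_awareness_false_tx_general
    {Ω : Type} [mΩ : MeasurableSpace Ω] (P : Measure Ω)
    (K H : ℕ) (hH : 2 ≤ H)
    (X : Fin K → Type) [∀ k, MeasurableSpace (X k)]
    (ν : ∀ k, Measure (X k))
    (L : ∀ k : Fin K, Fin H → X k → ℝ)
    (θ0 : Fin H)
    (hLpos : ∀ k θ x, 0 < L k θ x)
    (hLmeas : ∀ k θ, Measurable (L k θ))
    (ξ : ∀ k : Fin K, ℕ → Ω → X k)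
    (hξmeas : ∀ k i, Measurable (ξ k i))
    (hξdist : ∀ k (i : ℕ), 1 ≤ i →
      Measure.map (ξ k i) P = (ν k).withDensity (fun x => ENNReal.ofReal (L k θ0 x)))
    (hξindep : iIndepFun
      (fun (i : ℕ) (ω : Ω) (k : Fin K) => ξ k (i + 1) ω) P)
    (hKL : ∀ k θ θ',
      Integrable (fun x => L k θ x * Real.log (L k θ x / L k θ' x)) (ν k))
    (a : Fin K → Fin K → ℝ)
    (ha_nonneg : ∀ ℓ k, 0 ≤ a ℓ k)
    (ha_stoch : ∀ k, ∑ ℓ, a ℓ k = 1)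
    (ha_prim : ∃ n : ℕ, ∀ ℓ k, 0 < ((Matrix.of a) ^ n) ℓ k)
    (v : Fin K → ℝ)
    (hv_pos : ∀ ℓ, 0 < v ℓ)
    (hv_sum : ∑ ℓ, v ℓ = 1)
    (hv_eig : ∀ ℓ, ∑ k, a ℓ k * v k = v ℓ)
    (θTX : Fin H)
    (μb ψ ψh : Fin K → ℕ → Fin H → Ω → ℝ)
    (μinit : Fin K → Fin H → ℝ)
    (hμinit_pos : ∀ k θ, 0 < μinit k θ)
    (hμb0 : ∀ k θ ω, μb k 0 θ ω = μinit k θ)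
    (hψ : ∀ k (i : ℕ) θ ω, ψ k (i + 1) θ ω =
      μb k i θ ω * L k θ (ξ k (i + 1) ω) /
        ∑ θ', μb k i θ' ω * L k θ' (ξ k (i + 1) ω))
    (hψh_tx : ∀ k (i : ℕ) ω, ψh k (i + 1) θTX ω = ψ k (i + 1) θTX ω)
    (hψh_ntx : ∀ k (i : ℕ) θ ω, θ ≠ θTX →
      ψh k (i + 1) θ ω = (1 - ψ k (i + 1) θTX ω) / ((H : ℝ) - 1))
    (hcomb : ∀ k (i : ℕ) θ ω, μb k (i + 1) θ ω =
      Real.exp (a k k * Real.log (ψ k (i + 1) θ ω) +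
          ∑ ℓ ∈ Finset.univ.erase k, a ℓ k * Real.log (ψh ℓ (i + 1) θ ω)) /
        ∑ θ', Real.exp (a k k * Real.log (ψ k (i + 1) θ' ω) +
          ∑ ℓ ∈ Finset.univ.erase k, a ℓ k * Real.log (ψh ℓ (i + 1) θ' ω)))
    (hgap : (1 / ((H : ℝ) - 1)) * ∑ τ ∈ Finset.univ.erase θTX, (∑ m, v m * (∫ ω, Real.log (L m θ0 (ξ m 1 ω) / L m τ (ξ m 1 ω)) ∂P))
      < (∑ m, v m * (∫ ω, Real.log (L m θ0 (ξ m 1 ω) / L m θTX (ξ m 1 ω)) ∂P))) :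
    ∀ k : Fin K, ∀ᵐ ω ∂P,
      Tendsto (fun (i : ℕ) => μb k i θTX ω) atTop (𝓝 0) := by
  intro k
  have : Nontrivial (Fin H) := Fin.nontrivial_iff_two_le.2 hH
  have hμ_pos : ∀ i ℓ θ ω, 0 < μb ℓ i θ ω := by
    rintro (_ | i) ℓ θ ω
    · rw [hμb0]; exact hμinit_pos ℓ θ
    · rw [hcomb]; apply (exp_div_sum_exp_mem_Ioc _ θ).1
  set lam := fun ω i ℓ => meanExcess θTX (fun θ => Real.log (μb ℓ i θ ω))
  set x := fun ω r ℓ => meanExcess θTX (fun θ => Real.log (L ℓ θ (ξ ℓ r ω)))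
  have hrec : ∀ ω i k, ∑ ℓ, a ℓ k * (lam ω i ℓ + x ω (i + 1) ℓ) ≤ lam ω (i + 1) k :=
    fun ω i k => sum_mul_meanExcess_log_le_of_selfAware_update θTX (fun ℓ => ha_nonneg ℓ k)
      (fun ℓ θ => hμ_pos i ℓ θ ω) (fun ℓ θ => hLpos ℓ θ _) (fun ℓ θ => hψ ℓ i θ ω)
      (fun ℓ => hψh_tx ℓ i ω)
      (fun ℓ θ hθ => by rw [Fintype.card_fin]; exact hψh_ntx ℓ i θ ω hθ) k
      (fun θ => hcomb k i θ ω)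
  have havg := ae_all_iff.2 fun ℓ => ae_tendsto_avg_meanExcess_log_likelihood θ0 θTX
    (hLpos ℓ) (hLmeas ℓ) (hKL ℓ θ0) (fun r => hξmeas ℓ (r + 1))
    (fun r => hξdist ℓ (r + 1) (Nat.le_add_left 1 r))
    (hξindep.comp (fun _ p => p ℓ) fun _ => measurable_pi_apply ℓ)
  have hdrift := sum_mul_meanExcess_neg θTX v
    (fun m τ => ∫ ω, Real.log (L m θ0 (ξ m 1 ω) / L m τ (ξ m 1 ω)) ∂P)
  rw [Fintype.card_fin, ← one_div] at hdrift
  filter_upwards [havg] with ω hω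
  have hlam := tendsto_atTop_of_consensus_recursion
    (Matrix.mem_colStochastic_iff_sum.2 ⟨ha_nonneg, ha_stoch⟩) ha_prim hv_pos hv_sum hv_eig
    (hrec ω) hω (by rw [hdrift]; linarith) k
  refine (tendsto_add_atTop_iff_nat 1).1 (squeeze_zero (fun i => (hμ_pos _ k θTX ω).le)
    (fun i => apply_le_exp_neg_meanExcess_log (hμ_pos (i + 1) k · ω) (fun θ => ?_) θTX) ?_)
  · rw [hcomb]; apply (exp_div_sum_exp_mem_Ioc _ θ).2
  · exact Real.tendsto_exp_atBot.comp (tendsto_neg_atTop_atBot.comp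
      (hlam.comp (tendsto_add_atTop_nat 1)))

theorem truth_learning_with_self_awareness_false_tx
    {Ω : Type} [mΩ : MeasurableSpace Ω] (P : Measure Ω) [IsProbabilityMeasure P]
    (K H : ℕ) (hK : 0 < K) (hH : 2 ≤ H)
    (X : Fin K → Type) [∀ k, MeasurableSpace (X k)]
    (ν : ∀ k, Measure (X k))
    (L : ∀ k : Fin K, Fin H → X k → ℝ)
    (θ0 : Fin H)
    (hLpos : ∀ k θ x, 0 < L k θ x)
    (hLmeas : ∀ k θ, Measurable (L k θ))
    (hLdens : ∀ k θ, ∫ x, L k θ x ∂(ν k) = 1)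
    (ξ : ∀ k : Fin K, ℕ → Ω → X k)
    (hξmeas : ∀ k i, Measurable (ξ k i))
    (hξdist : ∀ k (i : ℕ), 1 ≤ i →
      Measure.map (ξ k i) P = (ν k).withDensity (fun x => ENNReal.ofReal (L k θ0 x)))
    (hξindep : iIndepFun
      (fun (i : ℕ) (ω : Ω) (k : Fin K) => ξ k (i + 1) ω) P)
    (hKL : ∀ k θ θ',
      Integrable (fun x => L k θ x * Real.log (L k θ x / L k θ' x)) (ν k))
    (a : Fin K → Fin K → ℝ)
    (ha_nonneg : ∀ ℓ k, 0 ≤ a ℓ k)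
    (ha_stoch : ∀ k, ∑ ℓ, a ℓ k = 1)
    (ha_prim : ∃ n : ℕ, ∀ ℓ k, 0 < ((Matrix.of a) ^ n) ℓ k)
    (v : Fin K → ℝ)
    (hv_pos : ∀ ℓ, 0 < v ℓ)
    (hv_sum : ∑ ℓ, v ℓ = 1)
    (hv_eig : ∀ ℓ, ∑ k, a ℓ k * v k = v ℓ)
    (ha_self : ∀ k, 0 < a k k)
    (θTX : Fin H)
    (hθTX : θTX ≠ θ0)
    (μb ψ ψh : Fin K → ℕ → Fin H → Ω → ℝ)
    (μinit : Fin K → Fin H → ℝ)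
    (hμinit_pos : ∀ k θ, 0 < μinit k θ)
    (hμinit_sum : ∀ k, ∑ θ, μinit k θ = 1)
    (hμb0 : ∀ k θ ω, μb k 0 θ ω = μinit k θ)
    (hψ : ∀ k (i : ℕ) θ ω, ψ k (i + 1) θ ω =
      μb k i θ ω * L k θ (ξ k (i + 1) ω) /
        ∑ θ', μb k i θ' ω * L k θ' (ξ k (i + 1) ω))
    (hψh_tx : ∀ k (i : ℕ) ω, ψh k (i + 1) θTX ω = ψ k (i + 1) θTX ω)
    (hψh_ntx : ∀ k (i : ℕ) θ ω, θ ≠ θTX →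
      ψh k (i + 1) θ ω = (1 - ψ k (i + 1) θTX ω) / ((H : ℝ) - 1))
    (hcomb : ∀ k (i : ℕ) θ ω, μb k (i + 1) θ ω =
      Real.exp (a k k * Real.log (ψ k (i + 1) θ ω) +
          ∑ ℓ ∈ Finset.univ.erase k, a ℓ k * Real.log (ψh ℓ (i + 1) θ ω)) /
        ∑ θ', Real.exp (a k k * Real.log (ψ k (i + 1) θ' ω) +
          ∑ ℓ ∈ Finset.univ.erase k, a ℓ k * Real.log (ψh ℓ (i + 1) θ' ω)))
    (hgap : (1 / ((H : ℝ) - 1)) * ∑ τ ∈ Finset.univ.erase θTX, (∑ m, v m * (∫ ω, Real.log (L m θ0 (ξ m 1 ω) / L m τ (ξ m 1 ω)) ∂P))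
      < (∑ m, v m * (∫ ω, Real.log (L m θ0 (ξ m 1 ω) / L m θTX (ξ m 1 ω)) ∂P))) :
    ∀ k : Fin K, ∀ᵐ ω ∂P,
      Tendsto (fun (i : ℕ) => μb k i θTX ω) atTop (𝓝 0) :=
  truth_learning_with_self_awareness_false_tx_general (mΩ := mΩ) P K H hH X ν L θ0 hLpos hLmeas ξ
    hξmeas hξdist hξindep hKL a ha_nonneg ha_stoch ha_prim v hv_pos hv_sum hv_eig θTX μb ψ ψh μinit
    hμinit_pos hμb0 hψ hψh_tx hψh_ntx hcomb hgap
end
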